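/- arXiv:1705.08149 — 8 statements merged into one kernel-verified Lean document; each statement's English description precedes it below -/
import Mathlib

section
/- Let $a \in \mathbb{Z}\setminus\{0\}$ be square-free. The series $$\sum_{\substack{(\mu,\lambda)\in\mathbb{Z}^2_{\mathrm{prim}}\\ \mu\neq 0}} \frac{\gcd(a,\mu)}{\sqrt{(\lambda^2+\mu^2)(\lambda^2\mu^2+(\mu^2+a\lambda^2)^2)}}$$ is (absolutely) convergent, i.e. the family of its terms is summable. -/
/-!
Since `a ≠ 0`, the numerator `gcd(a, μ)` is at most `|a|`. Since `μ ≠ 0` and `λ` is an integer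
(so `λ = 0` or `|λ| ≥ 1`), the two factors of the radicand are at least `|μ| max(1, |λ|)` and
`(|μ| max(1, |λ|))²`. Hence each term is at most `|a| max(1,|μ|)^(-3/2) max(1,|λ|)^(-3/2)`,
a summable product of two convergent series over `ℤ`.
-/

theorem summable_max_one_abs_int_rpow {p : ℝ} (hp : 1 < p) :
    Summable fun n : ℤ => max 1 |(n : ℝ)| ^ (-p) := by
  refine (Real.summable_abs_int_rpow hp).congr_cofinite ?_
  filter_upwards [(Set.finite_singleton (0 : ℤ)).compl_mem_cofinite] with n hn
  rw [max_eq_right (by exact_mod_cast Int.one_le_abs hn)]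

theorem Int.gcd_le_abs_left {a : ℤ} (ha : a ≠ 0) (b : ℤ) : (Int.gcd a b : ℝ) ≤ |(a : ℝ)| := by
  rw [← Int.cast_abs, ← Nat.cast_natAbs, Nat.cast_le]
  exact Nat.gcd_le_left _ (Int.natAbs_pos.mpr ha)

theorem abs_mul_max_one_abs_le {x : ℝ} (hx : 1 ≤ |x|) (y : ℝ) :
    |x| * max 1 |y| ≤ y ^ 2 + x ^ 2 := by
  rcases le_total 1 |y| with hy | hy
  · rw [max_eq_right hy]
    nlinarith [sq_abs x, sq_abs y, sq_nonneg (|x| - |y|)]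
  · rw [max_eq_left hy]
    nlinarith [sq_abs x, sq_nonneg y]

theorem sq_abs_mul_max_one_abs_le {x y : ℝ} (hx : 1 ≤ |x|) (hy : y = 0 ∨ 1 ≤ |y|) (c : ℝ) :
    (|x| * max 1 |y|) ^ 2 ≤ y ^ 2 * x ^ 2 + (x ^ 2 + c * y ^ 2) ^ 2 := by
  rcases hy with rfl | hy
  · have hx2 : 1 ≤ x ^ 2 := by nlinarith [sq_abs x]
    simp only [abs_zero, zero_le_one, max_eq_left, mul_one, sq_abs]
    nlinarith
  · rw [max_eq_right hy, mul_pow, sq_abs, sq_abs]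
    nlinarith [sq_nonneg (x ^ 2 + c * y ^ 2)]

theorem max_one_abs_mul_pow_three_le_denom {μ ν : ℤ} (hμ : μ ≠ 0) (a : ℝ) :
    (max 1 |(μ : ℝ)| * max 1 |(ν : ℝ)|) ^ 3 ≤
      ((ν : ℝ) ^ 2 + (μ : ℝ) ^ 2) *
        ((ν : ℝ) ^ 2 * (μ : ℝ) ^ 2 + ((μ : ℝ) ^ 2 + a * (ν : ℝ) ^ 2) ^ 2) := by
  have hx : 1 ≤ |(μ : ℝ)| := by exact_mod_cast Int.one_le_abs hμ
  have hy : (ν : ℝ) = 0 ∨ 1 ≤ |(ν : ℝ)| := by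
    rcases eq_or_ne ν 0 with h | h
    · exact .inl (by simp [h])
    · exact .inr (by exact_mod_cast Int.one_le_abs h)
  rw [max_eq_right hx, pow_succ']
  exact mul_le_mul (abs_mul_max_one_abs_le hx _) (sq_abs_mul_max_one_abs_le hx hy a)
    (by positivity) (by positivity)

theorem inv_sqrt_le_rpow_neg_three_halves {P D : ℝ} (hP : 0 < P) (hD : P ^ 3 ≤ D) :
    (√D)⁻¹ ≤ P ^ (-(3 / 2) : ℝ) := by
  have hP3 : P ^ (-(3 / 2) : ℝ) = (√(P ^ 3))⁻¹ := by
    rw [Real.sqrt_eq_rpow, Real.rpow_neg hP.le, ← Real.rpow_natCast, ← Real.rpow_mul hP.le]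
    norm_num
  rw [hP3]
  exact inv_anti₀ (by positivity) (Real.sqrt_le_sqrt hD)

theorem stmt_2_general (a : ℤ) (ha : a ≠ 0) :
    Summable (fun p : {p : ℤ × ℤ // (p ≠ 0 ∧ Int.gcd p.1 p.2 = 1) ∧ p.1 ≠ 0} =>
      (Int.gcd a p.val.1 : ℝ) /
        Real.sqrt (((p.val.2 : ℝ) ^ 2 + (p.val.1 : ℝ) ^ 2) *
          ((p.val.2 : ℝ) ^ 2 * (p.val.1 : ℝ) ^ 2 +
            ((p.val.1 : ℝ) ^ 2 + (a : ℝ) * (p.val.2 : ℝ) ^ 2) ^ 2))) := by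
  set r : ℤ → ℝ := fun n => max 1 |(n : ℝ)| ^ (-(3 / 2) : ℝ)
  have hr : Summable r := summable_max_one_abs_int_rpow (by norm_num)
  have hr_nonneg (n : ℤ) : 0 ≤ r n := by positivity
  have hmajorant : Summable fun q : ℤ × ℤ => |(a : ℝ)| * (r q.1 * r q.2) :=
    (hr.mul_of_nonneg hr hr_nonneg hr_nonneg).mul_left _
  refine .of_nonneg_of_le (fun _ => by positivity) ?_
    (hmajorant.comp_injective Subtype.coe_injective)
  rintro ⟨⟨μ, ν⟩, -, hμ⟩
  have hpos (n : ℤ) : (0 : ℝ) < max 1 |(n : ℝ)| := lt_max_of_lt_left one_pos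
  rw [div_eq_mul_inv]
  refine mul_le_mul (Int.gcd_le_abs_left ha μ) ?_ (by positivity) (abs_nonneg _)
  rw [← Real.mul_rpow (hpos μ).le (hpos ν).le]
  exact inv_sqrt_le_rpow_neg_three_halves (mul_pos (hpos μ) (hpos ν))
    (max_one_abs_mul_pow_three_le_denom hμ a)

/-- absolute convergence of the singular series for the non-normal
cubic surface `t₀t₁t₂ + t₃(t₀² + a t₁²) = 0`, `a ≠ 0` square-free. -/
theorem stmt_2 (a : ℤ) (ha : a ≠ 0) (hsq : Squarefree a) :
    Summable (fun p : {p : ℤ × ℤ // (p ≠ 0 ∧ Int.gcd p.1 p.2 = 1) ∧ p.1 ≠ 0} =>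
      (Int.gcd a p.val.1 : ℝ) /
        Real.sqrt (((p.val.2 : ℝ) ^ 2 + (p.val.1 : ℝ) ^ 2) *
          ((p.val.2 : ℝ) ^ 2 * (p.val.1 : ℝ) ^ 2 +
            ((p.val.1 : ℝ) ^ 2 + (a : ℝ) * (p.val.2 : ℝ) ^ 2) ^ 2))) :=
  stmt_2_general a ha
end

section
/- Let $F = t_0^2t_2 + t_0t_1t_3 + t_1^2t_4 \in \overline{\mathbb{Q}}[t_0,\ldots,t_4]$ and let $A \in \mathrm{GL}_5(\overline{\mathbb{Q}})$ act on polynomials by substituting $A(t_j) = \sum_i A_{ij} t_i$ for each variable. If there is a scalar $c \in \overline{\mathbb{Q}}^*$ with $F \circ A = c \cdot F$, then $A(t_0)$ and $A(t_1)$ both lie in the $\overline{\mathbb{Q}}$-linear span of $t_0$ and $t_1$; consequently $A$ induces an invertible linear map on $\overline{\mathbb{Q}} t_0 \oplus \overline{\mathbb{Q}} t_1$. -/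
open MvPolynomial

/-- The cubic form `t₀²t₂ + t₀t₁t₃ + t₁²t₄` over the algebraic closure of `ℚ`. -/
noncomputable def cubicF : MvPolynomial (Fin 5) (AlgebraicClosure ℚ) :=
  X 0 ^ 2 * X 2 + X 0 * X 1 * X 3 + X 1 ^ 2 * X 4

/-- The action of a matrix `A` on the variables: `A(t_j) = ∑ i A_{ij} t_i`. -/
noncomputable def actVar (A : Matrix (Fin 5) (Fin 5) (AlgebraicClosure ℚ)) (j : Fin 5) :
    MvPolynomial (Fin 5) (AlgebraicClosure ℚ) :=
  ∑ i, C (A i j) * X i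

namespace Stmt5Aux

abbrev K := AlgebraicClosure ℚ

lemma pderiv_actVar (A : Matrix (Fin 5) (Fin 5) K) (k j : Fin 5) :
    pderiv k (actVar A j) = C (A k j) := by
  simp [actVar, pderiv_X, Pi.single_apply]

lemma eval_actVar (A : Matrix (Fin 5) (Fin 5) K) (v : Fin 5 → K) (j : Fin 5) :
    eval v (actVar A j) = ∑ i, A i j * v i := by
  simp [actVar]

lemma expand (A : Matrix (Fin 5) (Fin 5) K) :
    bind₁ (actVar A) cubicF = actVar A 0 ^ 2 * actVar A 2 + actVar A 0 * actVar A 1 * actVar A 3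
      + actVar A 1 ^ 2 * actVar A 4 := by
  simp [cubicF]

lemma grad_eq (A : Matrix (Fin 5) (Fin 5) K) (c : K)
    (hA : bind₁ (actVar A) cubicF = C c * cubicF)
    (v : Fin 5 → K) (hv0 : v 0 = 0) (hv1 : v 1 = 0)
    (L : Fin 5 → K) (hL : ∀ j, L j = ∑ i, A i j * v i) (k : Fin 5) :
    A k 0 * (2 * L 0 * L 2 + L 1 * L 3) + A k 1 * (L 0 * L 3 + 2 * L 1 * L 4)
      + A k 2 * L 0 ^ 2 + A k 3 * (L 0 * L 1) + A k 4 * L 1 ^ 2 = 0 := by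
  have h := congrArg (eval v) (congrArg (pderiv k) hA)
  rw [expand] at h
  simp only [map_add, map_mul, pderiv_mul, pow_two, pderiv_actVar, eval_actVar, eval_C,
    pderiv_C_mul] at h
  simp only [← hL] at h
  simp [cubicF, pderiv_mul, pderiv_X, Pi.single_apply, hv0, hv1, apply_ite (eval v)] at h
  linear_combination h

lemma col_zero (A : GL (Fin 5) K) (c : K)
    (hA : bind₁ (actVar (A : Matrix (Fin 5) (Fin 5) K)) cubicF = C c * cubicF)
    (v : Fin 5 → K) (hv0 : v 0 = 0) (hv1 : v 1 = 0) :
    (∑ i, (A : Matrix (Fin 5) (Fin 5) K) i 0 * v i) = 0 ∧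
    (∑ i, (A : Matrix (Fin 5) (Fin 5) K) i 1 * v i) = 0 := by
  set A' := (A : Matrix (Fin 5) (Fin 5) K) with hA'
  set L : Fin 5 → K := fun j => ∑ i, A' i j * v i with hLdef
  have hL : ∀ j, L j = ∑ i, A' i j * v i := fun j => rfl
  have hgr := grad_eq A' c hA v hv0 hv1 L hL
  set w : Fin 5 → K := ![2 * L 0 * L 2 + L 1 * L 3, L 0 * L 3 + 2 * L 1 * L 4,
    L 0 ^ 2, L 0 * L 1, L 1 ^ 2] with hw
  have hmv : A'.mulVec w = 0 := by
    funext k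
    have := hgr k
    simp only [Matrix.mulVec, dotProduct, Fin.sum_univ_five, hw]
    simp only [Matrix.cons_val_zero, Matrix.cons_val_one, Matrix.head_cons,
      Matrix.cons_val_two, Matrix.tail_cons, Matrix.cons_val_three, Matrix.cons_val_four]
    simpa using this
  have hw0 : w = 0 := by
    have h2 := congrArg (Matrix.mulVec (↑A⁻¹ : Matrix (Fin 5) (Fin 5) K)) hmv
    rwa [Matrix.mulVec_mulVec, ← Matrix.GeneralLinearGroup.coe_mul, inv_mul_cancel,
      Matrix.GeneralLinearGroup.coe_one, Matrix.one_mulVec, Matrix.mulVec_zero] at h2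
  have h0 : L 0 = 0 := by
    simpa [hw] using congrFun hw0 2
  have h1 : L 1 = 0 := by
    simpa [hw] using congrFun hw0 4
  exact ⟨h0, h1⟩

end Stmt5Aux

open Stmt5Aux in
/-- any linear substitution preserving `F` up to a nonzero scalar maps the
span of `t₀, t₁` to itself (and restricts to an invertible map on it). -/
theorem stmt_5 (A : GL (Fin 5) (AlgebraicClosure ℚ)) (c : AlgebraicClosure ℚ) (hc : c ≠ 0)
    (hA : bind₁ (actVar (A : Matrix (Fin 5) (Fin 5) (AlgebraicClosure ℚ))) cubicF =
      C c * cubicF) :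
    ∃ a b c' d : AlgebraicClosure ℚ,
      actVar (A : Matrix (Fin 5) (Fin 5) (AlgebraicClosure ℚ)) 0 = C a * X 0 + C b * X 1 ∧
      actVar (A : Matrix (Fin 5) (Fin 5) (AlgebraicClosure ℚ)) 1 = C c' * X 0 + C d * X 1 ∧
      a * d - b * c' ≠ 0 := by
  set A' := (A : Matrix (Fin 5) (Fin 5) K) with hA'def
  have ker : ∀ x : Fin 5 → K, A'.mulVec x = 0 → x = 0 := by
    intro x hx
    have h2 := congrArg (Matrix.mulVec (↑A⁻¹ : Matrix (Fin 5) (Fin 5) K)) hx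
    rwa [Matrix.mulVec_mulVec, hA'def, ← Matrix.GeneralLinearGroup.coe_mul, inv_mul_cancel,
      Matrix.GeneralLinearGroup.coe_one, Matrix.one_mulVec, Matrix.mulVec_zero] at h2
  have key : ∀ m : Fin 5, m = 2 ∨ m = 3 ∨ m = 4 → A' m 0 = 0 ∧ A' m 1 = 0 := by
    intro m hm
    have hcz := col_zero A c hA (Pi.single m 1)
      (by rcases hm with h|h|h <;> subst h <;> simp [Pi.single_apply])
      (by rcases hm with h|h|h <;> subst h <;> simp [Pi.single_apply])
    constructor
    · have := hcz.1
      rwa [Finset.sum_eq_single m (by intro i _ hi; simp [Pi.single_apply, hi]) (by simp),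
        Pi.single_eq_same, mul_one] at this
    · have := hcz.2
      rwa [Finset.sum_eq_single m (by intro i _ hi; simp [Pi.single_apply, hi]) (by simp),
        Pi.single_eq_same, mul_one] at this
  obtain ⟨h20, h21⟩ := key 2 (Or.inl rfl)
  obtain ⟨h30, h31⟩ := key 3 (Or.inr (Or.inl rfl))
  obtain ⟨h40, h41⟩ := key 4 (Or.inr (Or.inr rfl))
  refine ⟨A' 0 0, A' 1 0, A' 0 1, A' 1 1, ?_, ?_, ?_⟩
  · simp [actVar, Fin.sum_univ_five, h20, h30, h40]
  · simp [actVar, Fin.sum_univ_five, h21, h31, h41]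
  · intro had
    by_cases ha : A' 0 0 ≠ 0
    · have hx : A'.mulVec ![A' 0 1, -(A' 0 0), 0, 0, 0] = 0 := by
        funext k
        simp only [Matrix.mulVec, dotProduct, Fin.sum_univ_five, Matrix.cons_val_zero,
          Matrix.cons_val_one, Matrix.head_cons, Matrix.cons_val_two, Matrix.tail_cons,
          Matrix.cons_val_three, Matrix.cons_val_four, Pi.zero_apply]
        fin_cases k
        · simp only [Fin.mk_zero]; ring
        · simp only [Fin.mk_one]; linear_combination -had
        · simp [h20, h21]
        · simp [h30, h31]
        · simp [h40, h41]
      have := congrFun (ker _ hx) 1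
      simp at this
      exact ha this
    · push_neg at ha
      by_cases hb : A' 1 0 ≠ 0
      · have hx : A'.mulVec ![A' 1 1, -(A' 1 0), 0, 0, 0] = 0 := by
          funext k
          simp only [Matrix.mulVec, dotProduct, Fin.sum_univ_five, Matrix.cons_val_zero,
            Matrix.cons_val_one, Matrix.head_cons, Matrix.cons_val_two, Matrix.tail_cons,
            Matrix.cons_val_three, Matrix.cons_val_four, Pi.zero_apply]
          fin_cases k
          · simp only [Fin.mk_zero]; linear_combination had
          · simp only [Fin.mk_one]; ring
          · simp [h20, h21]
          · simp [h30, h31]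
          · simp [h40, h41]
        have := congrFun (ker _ hx) 1
        simp at this
        exact hb this
      · push_neg at hb
        have hx : A'.mulVec ![1, 0, 0, 0, 0] = 0 := by
          funext k
          simp only [Matrix.mulVec, dotProduct, Fin.sum_univ_five, Matrix.cons_val_zero,
            Matrix.cons_val_one, Matrix.head_cons, Matrix.cons_val_two, Matrix.tail_cons,
            Matrix.cons_val_three, Matrix.cons_val_four, Pi.zero_apply]
          fin_cases k
          · simp [ha]
          · simp [hb]
          · simp [h20]
          · simp [h30]
          · simp [h40]
        have := congrFun (ker _ hx) 0
        simp at this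
end

section
/- Let $F = t_0^2t_2 + t_0t_1t_3 + t_1^2t_4 \in \overline{\mathbb{Q}}[t_0,\ldots,t_4]$. For every invertible $2\times 2$ matrix $\begin{pmatrix} a & c \\ b & d\end{pmatrix} \in \mathrm{GL}_2(\overline{\mathbb{Q}})$ there exist $A \in \mathrm{GL}_5(\overline{\mathbb{Q}})$ and $c' \in \overline{\mathbb{Q}}^*$ such that $F \circ A = c' \cdot F$ and the action of $A$ on the variables satisfies $A(t_0) = a t_0 + b t_1$ and $A(t_1) = c t_0 + d t_1$. In other words, the homomorphism from the stabilizer of $F$ up to scalar in $\mathrm{GL}_5(\overline{\mathbb{Q}})$ to $\mathrm{GL}_2(\overline{\mathbb{Q}})$, given by restriction to the span of $t_0, t_1$, is surjective. -/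
open MvPolynomial

set_option maxHeartbeats 1600000 in
/-- the restriction map from the stabilizer of `F` (up to scalar) in
`GL₅` to `GL₂` (acting on the span of `t₀,t₁`) is surjective: any invertible
`(a c; b d)` is realized by some `A ∈ GL₅` with `F ∘ A` proportional to `F`,
`A(t₀) = a t₀ + b t₁` and `A(t₁) = c t₀ + d t₁`. -/
theorem stmt_6 (M : GL (Fin 2) (AlgebraicClosure ℚ)) :
    ∃ A : GL (Fin 5) (AlgebraicClosure ℚ), ∃ c' : AlgebraicClosure ℚ, c' ≠ 0 ∧
      bind₁ (actVar (A : Matrix (Fin 5) (Fin 5) (AlgebraicClosure ℚ))) cubicF =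
        C c' * cubicF ∧
      actVar (A : Matrix (Fin 5) (Fin 5) (AlgebraicClosure ℚ)) 0 =
        C ((M : Matrix (Fin 2) (Fin 2) (AlgebraicClosure ℚ)) 0 0) * X 0 +
          C ((M : Matrix (Fin 2) (Fin 2) (AlgebraicClosure ℚ)) 1 0) * X 1 ∧
      actVar (A : Matrix (Fin 5) (Fin 5) (AlgebraicClosure ℚ)) 1 =
        C ((M : Matrix (Fin 2) (Fin 2) (AlgebraicClosure ℚ)) 0 1) * X 0 +
          C ((M : Matrix (Fin 2) (Fin 2) (AlgebraicClosure ℚ)) 1 1) * X 1 := by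
  set K := AlgebraicClosure ℚ
  obtain ⟨a, ha⟩ : ∃ x, (M : Matrix (Fin 2) (Fin 2) K) 0 0 = x := ⟨_, rfl⟩
  obtain ⟨c, hc⟩ : ∃ x, (M : Matrix (Fin 2) (Fin 2) K) 0 1 = x := ⟨_, rfl⟩
  obtain ⟨b, hb⟩ : ∃ x, (M : Matrix (Fin 2) (Fin 2) K) 1 0 = x := ⟨_, rfl⟩
  obtain ⟨d, hd⟩ : ∃ x, (M : Matrix (Fin 2) (Fin 2) K) 1 1 = x := ⟨_, rfl⟩
  obtain ⟨e, he⟩ : ∃ x, ((M⁻¹ : GL (Fin 2) K) : Matrix (Fin 2) (Fin 2) K) 0 0 = x := ⟨_, rfl⟩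
  obtain ⟨g, hg⟩ : ∃ x, ((M⁻¹ : GL (Fin 2) K) : Matrix (Fin 2) (Fin 2) K) 0 1 = x := ⟨_, rfl⟩
  obtain ⟨f, hf⟩ : ∃ x, ((M⁻¹ : GL (Fin 2) K) : Matrix (Fin 2) (Fin 2) K) 1 0 = x := ⟨_, rfl⟩
  obtain ⟨h, hh⟩ : ∃ x, ((M⁻¹ : GL (Fin 2) K) : Matrix (Fin 2) (Fin 2) K) 1 1 = x := ⟨_, rfl⟩
  have hMN : (M : Matrix (Fin 2) (Fin 2) K) * ((M⁻¹ : GL (Fin 2) K) : Matrix (Fin 2) (Fin 2) K)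
      = 1 := M.mul_inv
  have hNM : ((M⁻¹ : GL (Fin 2) K) : Matrix (Fin 2) (Fin 2) K) * (M : Matrix (Fin 2) (Fin 2) K)
      = 1 := M.inv_mul
  have S1 : a * e + c * f = 1 := by
    have := congrFun (congrFun hMN 0) 0
    rw [Matrix.mul_apply, Fin.sum_univ_two] at this
    rw [← ha, ← hc, ← he, ← hf]; simpa using this
  have S2 : a * g + c * h = 0 := by
    have := congrFun (congrFun hMN 0) 1
    rw [Matrix.mul_apply, Fin.sum_univ_two] at this
    rw [← ha, ← hc, ← hg, ← hh]; simpa using this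
  have S3 : b * e + d * f = 0 := by
    have := congrFun (congrFun hMN 1) 0
    rw [Matrix.mul_apply, Fin.sum_univ_two] at this
    rw [← hb, ← hd, ← he, ← hf]; simpa using this
  have S4 : b * g + d * h = 1 := by
    have := congrFun (congrFun hMN 1) 1
    rw [Matrix.mul_apply, Fin.sum_univ_two] at this
    rw [← hb, ← hd, ← hg, ← hh]; simpa using this
  have R1 : e * a + g * b = 1 := by
    have := congrFun (congrFun hNM 0) 0
    rw [Matrix.mul_apply, Fin.sum_univ_two] at this
    rw [← ha, ← hb, ← he, ← hg]; simpa using this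
  have R2 : e * c + g * d = 0 := by
    have := congrFun (congrFun hNM 0) 1
    rw [Matrix.mul_apply, Fin.sum_univ_two] at this
    rw [← hc, ← hd, ← he, ← hg]; simpa using this
  have R3 : f * a + h * b = 0 := by
    have := congrFun (congrFun hNM 1) 0
    rw [Matrix.mul_apply, Fin.sum_univ_two] at this
    rw [← ha, ← hb, ← hf, ← hh]; simpa using this
  have R4 : f * c + h * d = 1 := by
    have := congrFun (congrFun hNM 1) 1
    rw [Matrix.mul_apply, Fin.sum_univ_two] at this
    rw [← hc, ← hd, ← hf, ← hh]; simpa using this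
  set Amat : Matrix (Fin 5) (Fin 5) K :=
    !![a, c, 0, 0, 0;
       b, d, 0, 0, 0;
       0, 0, d^2, -(2*b*d), b^2;
       0, 0, -(c*d), a*d + b*c, -(a*b);
       0, 0, c^2, -(2*a*c), a^2] with hAmat
  set Bmat : Matrix (Fin 5) (Fin 5) K :=
    !![e, g, 0, 0, 0;
       f, h, 0, 0, 0;
       0, 0, h^2, -(2*f*h), f^2;
       0, 0, -(g*h), e*h + f*g, -(e*f);
       0, 0, g^2, -(2*e*g), e^2] with hBmat
  have hAB : Amat * Bmat = 1 := by
    rw [hAmat, hBmat]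
    ext i j
    fin_cases i <;> fin_cases j <;>
      simp [Matrix.mul_apply, Fin.sum_univ_five, Matrix.one_apply, Matrix.vecHead, Matrix.vecTail] <;>
      first
        | linear_combination S1
        | linear_combination S2
        | linear_combination S3
        | linear_combination S4
        | linear_combination (b*g + d*h + 1) * S4
        | linear_combination (-2*(b*g + d*h)) * S3
        | linear_combination (b*e + d*f) * S3
        | linear_combination (-(b*g + d*h)) * S2
        | linear_combination (a*e + c*f) * S4 + S1 + (b*e + d*f) * S2
        | linear_combination (-(a*e + c*f)) * S3
        | linear_combination (a*g + c*h) * S2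
        | linear_combination (-2*(a*e + c*f)) * S2
        | linear_combination (a*e + c*f + 1) * S1
  have hBA : Bmat * Amat = 1 := mul_eq_one_comm.mp hAB
  refine ⟨⟨Amat, Bmat, hAB, hBA⟩, (a*d - b*c)^2, ?_, ?_, ?_, ?_⟩
  · have hu : IsUnit (M : Matrix (Fin 2) (Fin 2) K).det :=
      (Matrix.isUnit_iff_isUnit_det _).mp M.isUnit
    rw [Matrix.det_fin_two, ha, hb, hc, hd] at hu
    have hdet : a*d - b*c ≠ 0 := by
      intro hcon
      exact hu.ne_zero (by linear_combination hcon)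
    exact pow_ne_zero 2 hdet
  · show bind₁ (actVar Amat) cubicF = _
    rw [hAmat]
    simp only [cubicF, map_add, map_mul, map_pow, bind₁_X_right, actVar, Fin.sum_univ_five]
    simp [map_sub, map_neg, map_ofNat, map_mul, map_pow, Matrix.vecHead, Matrix.vecTail]
    ring
  · show actVar Amat 0 = _
    rw [hAmat, ha, hb]
    simp [actVar, Fin.sum_univ_five, Matrix.vecHead, Matrix.vecTail]
  · show actVar Amat 1 = _
    rw [hAmat, hc, hd]
    simp [actVar, Fin.sum_univ_five, Matrix.vecHead, Matrix.vecTail]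
end

section
/- Let $F = t_0^2t_2 + t_0t_1t_3 + t_1^2t_4 \in \overline{\mathbb{Q}}[t_0,\ldots,t_4]$. Let $A \in \mathrm{GL}_5(\overline{\mathbb{Q}})$ act on polynomials by substitution and suppose $A(t_0) = t_0$ and $A(t_1) = t_1$. Then $F \circ A = c\cdot F$ for some $c \in \overline{\mathbb{Q}}^*$ if and only if there exist $w \in \overline{\mathbb{Q}}^*$ and $\alpha, \beta \in \overline{\mathbb{Q}}$ such that $A(t_2) = w\, t_2 - \alpha\, t_1$, $A(t_3) = w\, t_3 + \alpha\, t_0 - \beta\, t_1$, and $A(t_4) = w\, t_4 + \beta\, t_0$. Moreover the set of such triples $(w,\alpha,\beta) \in \overline{\mathbb{Q}}^* \times \overline{\mathbb{Q}} \times \overline{\mathbb{Q}}$ forms a group under the product $(w,\alpha,\beta)\cdot(w',\alpha',\beta') = (ww', w'\alpha+\alpha', w'\beta+\beta')$, and $(w,\alpha,\beta) \mapsto A$ is a group isomorphism onto the group of substitutions fixing $t_0,t_1$ and preserving $F$ up to scalar. -/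
open MvPolynomial

/-- The matrix of the substitution fixing `t₀, t₁` with
`t₂ ↦ w t₂ − α t₁`, `t₃ ↦ w t₃ + α t₀ − β t₁`, `t₄ ↦ w t₄ + β t₀`
(so that its `j`-th column gives the image of `t_j`). -/
noncomputable def matFor (w α β : AlgebraicClosure ℚ) : Matrix (Fin 5) (Fin 5) (AlgebraicClosure ℚ) :=
  !![1, 0, 0, α, β;
     0, 1, -α, -β, 0;
     0, 0, w, 0, 0;
     0, 0, 0, w, 0;
     0, 0, 0, 0, w]

local notation "K" => AlgebraicClosure ℚ

open Matrix

theorem eq_of_affine_eq {R : Type*} [CommRing R] {a b₁ b₂ b₃ c₁ c₂ c₃ : R}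
    (h : ∀ x y z : R, a + x * b₁ + y * b₂ + z * b₃ = x * c₁ + y * c₂ + z * c₃) :
    a = 0 ∧ b₁ = c₁ ∧ b₂ = c₂ ∧ b₃ = c₃ := by
  have h0 := h 0 0 0
  simp only [zero_mul, add_zero] at h0
  refine ⟨h0, ?_, ?_, ?_⟩
  · linear_combination h 1 0 0 - h0
  · linear_combination h 0 1 0 - h0
  · linear_combination h 0 0 1 - h0

section

variable {A : Matrix (Fin 5) (Fin 5) K}

theorem eval_actVar (p : Fin 5 → K) (j : Fin 5) : eval p (actVar A j) = (p ᵥ* A) j := by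
  simp [actVar, vecMul, dotProduct, mul_comm]

theorem vecMul_apply_of_actVar_eq_X {j k : Fin 5} (h : actVar A j = X k) (p : Fin 5 → K) :
    (p ᵥ* A) j = p k := by
  rw [← eval_actVar, h, eval_X]

theorem apply_of_actVar_eq_X {j k : Fin 5} (h : actVar A j = X k) (i : Fin 5) :
    A i j = Pi.single (M := fun _ => K) i 1 k := by
  simpa [single_one_vecMul] using vecMul_apply_of_actVar_eq_X h (Pi.single i 1)

theorem eval_bind₁_actVar_cubicF (h0 : actVar A 0 = X 0) (h1 : actVar A 1 = X 1)
    (p : Fin 5 → K) : eval p (bind₁ (actVar A) cubicF) =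
      p 0 ^ 2 * (p ᵥ* A) 2 + p 0 * p 1 * (p ᵥ* A) 3 + p 1 ^ 2 * (p ᵥ* A) 4 := by
  simp [cubicF, eval_actVar, vecMul_apply_of_actVar_eq_X h0, vecMul_apply_of_actVar_eq_X h1]

theorem eq_matFor_of_bind₁_actVar_cubicF {c : K} (h0 : actVar A 0 = X 0)
    (h1 : actVar A 1 = X 1) (h : bind₁ (actVar A) cubicF = C c * cubicF) :
    A = matFor c (A 0 3) (A 0 4) := by
  have hEval (p : Fin 5 → K) :
      p 0 ^ 2 * (p ᵥ* A) 2 + p 0 * p 1 * (p ᵥ* A) 3 + p 1 ^ 2 * (p ᵥ* A) 4 =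
        c * (p 0 ^ 2 * p 2 + p 0 * p 1 * p 3 + p 1 ^ 2 * p 4) := by
    rw [← eval_bind₁_actVar_cubicF h0 h1, h]
    simp [cubicF]
  -- On `t₀ = 1, t₁ = 0` the identity reads `A(t₂) = c t₂`, on `t₀ = 0, t₁ = 1` it reads
  -- `A(t₄) = c t₄`, and on `t₀ = t₁ = 1` it then reads `A(t₃) = c t₃` up to the terms in `t₀, t₁`.
  have col2 (x y z : K) : A 0 2 + x * A 2 2 + y * A 3 2 + z * A 4 2 = x * c + y * 0 + z * 0 := by
    have := hEval ![1, 0, x, y, z]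
    simp only [vecMul, dotProduct, Fin.sum_univ_five, cons_val_zero, cons_val_one, cons_val] at this
    linear_combination this
  have col4 (x y z : K) : A 1 4 + x * A 2 4 + y * A 3 4 + z * A 4 4 = x * 0 + y * 0 + z * c := by
    have := hEval ![0, 1, x, y, z]
    simp only [vecMul, dotProduct, Fin.sum_univ_five, cons_val_zero, cons_val_one, cons_val] at this
    linear_combination this
  have col3 (x y z : K) : A 0 3 + A 1 2 + A 1 3 + A 0 4 + x * A 2 3 + y * A 3 3 + z * A 4 3 =
      x * 0 + y * c + z * 0 := by
    have := hEval ![1, 1, x, y, z]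
    simp only [vecMul, dotProduct, Fin.sum_univ_five, cons_val_zero, cons_val_one, cons_val] at this
    linear_combination this - col2 x y z - col4 x y z
  obtain ⟨e02, e22, e32, e42⟩ := eq_of_affine_eq col2
  obtain ⟨e14, e24, e34, e44⟩ := eq_of_affine_eq col4
  obtain ⟨hsum, e23, e33, e43⟩ := eq_of_affine_eq col3
  have halt := hEval ![1, -1, 0, 0, 0]
  simp only [vecMul, dotProduct, Fin.sum_univ_five, cons_val_zero, cons_val_one, cons_val]
    at halt
  have e12 : A 1 2 = -A 0 3 := by linear_combination (hsum - halt + e02 - e14) / 2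
  have e13 : A 1 3 = -A 0 4 := by linear_combination (hsum + halt - e02 + e14) / 2
  ext i j
  fin_cases i <;> fin_cases j <;>
    simp [matFor, apply_of_actVar_eq_X h0, apply_of_actVar_eq_X h1, e02, e12, e22, e32, e42,
      e13, e23, e33, e43, e14, e24, e34, e44]

theorem bind₁_actVar_cubicF {w α β : K} (h0 : actVar A 0 = X 0) (h1 : actVar A 1 = X 1)
    (h2 : actVar A 2 = C w * X 2 - C α * X 1)
    (h3 : actVar A 3 = C w * X 3 + C α * X 0 - C β * X 1)
    (h4 : actVar A 4 = C w * X 4 + C β * X 0) :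
    bind₁ (actVar A) cubicF = C w * cubicF := by
  simp only [cubicF, map_add, map_mul, map_pow, bind₁_X_right, h0, h1, h2, h3, h4]
  ring

end

section

variable (w α β : K)

theorem actVar_matFor_zero : actVar (matFor w α β) 0 = X 0 := by
  simp [actVar, matFor, Fin.sum_univ_five]

theorem actVar_matFor_one : actVar (matFor w α β) 1 = X 1 := by
  simp [actVar, matFor, Fin.sum_univ_five]

theorem actVar_matFor_two : actVar (matFor w α β) 2 = C w * X 2 - C α * X 1 := by
  simp [actVar, matFor, Fin.sum_univ_five]
  ring

theorem actVar_matFor_three :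
    actVar (matFor w α β) 3 = C w * X 3 + C α * X 0 - C β * X 1 := by
  simp [actVar, matFor, Fin.sum_univ_five]
  ring

theorem actVar_matFor_four : actVar (matFor w α β) 4 = C w * X 4 + C β * X 0 := by
  simp [actVar, matFor, Fin.sum_univ_five]
  ring

theorem bind₁_actVar_matFor_cubicF : bind₁ (actVar (matFor w α β)) cubicF = C w * cubicF :=
  bind₁_actVar_cubicF (actVar_matFor_zero w α β) (actVar_matFor_one w α β)
    (actVar_matFor_two w α β) (actVar_matFor_three w α β) (actVar_matFor_four w α β)

theorem matFor_one_zero_zero : matFor 1 0 0 = (1 : Matrix (Fin 5) (Fin 5) K) := by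
  ext i j
  fin_cases i <;> fin_cases j <;> simp [matFor, one_apply]

theorem matFor_mul_matFor (w' α' β' : K) :
    matFor w α β * matFor w' α' β' = matFor (w * w') (w' * α + α') (w' * β + β') := by
  ext i j
  fin_cases i <;> fin_cases j <;> simp [matFor, mul_apply, Fin.sum_univ_five] <;> ring

theorem isUnit_matFor {w : K} (hw : w ≠ 0) : IsUnit (matFor w α β) := by
  refine IsUnit.of_mul_eq_one (matFor w⁻¹ (-(w⁻¹ * α)) (-(w⁻¹ * β))) ?_
  rw [matFor_mul_matFor, ← matFor_one_zero_zero]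
  congr 1 <;> field_simp <;> ring

end

theorem matFor_injective : Function.Injective fun t : K × K × K => matFor t.1 t.2.1 t.2.2 := by
  rintro ⟨w, α, β⟩ ⟨w', α', β'⟩ h
  have hw := congrFun (congrFun h 2) 2
  have hα := congrFun (congrFun h 0) 3
  have hβ := congrFun (congrFun h 0) 4
  simp only [matFor] at hw hα hβ
  simp_all

/-- description of the substitutions fixing `t₀, t₁` and preserving
`F = t₀²t₂ + t₀t₁t₃ + t₁²t₄` up to a nonzero scalar: they are exactly those given by
triples `(w, α, β)` with `w ≠ 0`, and `(w, α, β) ↦ matFor w α β` is a group isomorphism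
from `(w,α,β)·(w',α',β') = (ww', w'α+α', w'β+β')` onto this group of substitutions. -/
theorem stmt_7 :
    (∀ A : GL (Fin 5) (AlgebraicClosure ℚ),
      actVar (A : Matrix (Fin 5) (Fin 5) (AlgebraicClosure ℚ)) 0 = X 0 →
      actVar (A : Matrix (Fin 5) (Fin 5) (AlgebraicClosure ℚ)) 1 = X 1 →
      ((∃ c : AlgebraicClosure ℚ, c ≠ 0 ∧
          bind₁ (actVar (A : Matrix (Fin 5) (Fin 5) (AlgebraicClosure ℚ))) cubicF =
            C c * cubicF) ↔
        (∃ w α β : AlgebraicClosure ℚ, w ≠ 0 ∧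
          actVar (A : Matrix (Fin 5) (Fin 5) (AlgebraicClosure ℚ)) 2 =
            C w * X 2 - C α * X 1 ∧
          actVar (A : Matrix (Fin 5) (Fin 5) (AlgebraicClosure ℚ)) 3 =
            C w * X 3 + C α * X 0 - C β * X 1 ∧
          actVar (A : Matrix (Fin 5) (Fin 5) (AlgebraicClosure ℚ)) 4 =
            C w * X 4 + C β * X 0))) ∧
    -- `matFor` lands in `GL₅` when `w ≠ 0`
    (∀ w α β : AlgebraicClosure ℚ, w ≠ 0 → IsUnit (matFor w α β)) ∧
    -- `matFor` sends the identity to the identity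
    matFor 1 0 0 = 1 ∧
    -- `matFor` is a group homomorphism for the twisted product on `K* ⊕ K ⊕ K`
    (∀ w α β w' α' β' : AlgebraicClosure ℚ,
      matFor w α β * matFor w' α' β' = matFor (w * w') (w' * α + α') (w' * β + β')) ∧
    -- `matFor` is injective
    (∀ w α β w' α' β' : AlgebraicClosure ℚ,
      matFor w α β = matFor w' α' β' → (w, α, β) = (w', α', β')) ∧
    -- `matFor` is onto the group of substitutions fixing `t₀, t₁` and preserving `F`
    -- up to a nonzero scalar
    (∀ A : GL (Fin 5) (AlgebraicClosure ℚ),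
      ((actVar (A : Matrix (Fin 5) (Fin 5) (AlgebraicClosure ℚ)) 0 = X 0 ∧
        actVar (A : Matrix (Fin 5) (Fin 5) (AlgebraicClosure ℚ)) 1 = X 1 ∧
        ∃ c : AlgebraicClosure ℚ, c ≠ 0 ∧
          bind₁ (actVar (A : Matrix (Fin 5) (Fin 5) (AlgebraicClosure ℚ))) cubicF =
            C c * cubicF) ↔
      (∃ w α β : AlgebraicClosure ℚ, w ≠ 0 ∧
        (A : Matrix (Fin 5) (Fin 5) (AlgebraicClosure ℚ)) = matFor w α β))) := by
  refine ⟨fun A h0 h1 => ⟨?_, ?_⟩, fun w α β hw => isUnit_matFor α β hw,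
    matFor_one_zero_zero, matFor_mul_matFor, fun _ _ _ _ _ _ h => matFor_injective h,
    fun A => ⟨?_, ?_⟩⟩
  · rintro ⟨c, hc, h⟩
    rw [eq_matFor_of_bind₁_actVar_cubicF h0 h1 h]
    exact ⟨c, _, _, hc, actVar_matFor_two .., actVar_matFor_three .., actVar_matFor_four ..⟩
  · rintro ⟨w, α, β, hw, h2, h3, h4⟩
    exact ⟨w, hw, bind₁_actVar_cubicF h0 h1 h2 h3 h4⟩
  · rintro ⟨h0, h1, c, hc, h⟩
    exact ⟨c, _, _, hc, eq_matFor_of_bind₁_actVar_cubicF h0 h1 h⟩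
  · rintro ⟨w, α, β, hw, hA⟩
    rw [hA]
    exact ⟨actVar_matFor_zero .., actVar_matFor_one .., w, hw, bind₁_actVar_matFor_cubicF ..⟩
end

section
/- Let $a \in \mathbb{Z}\setminus\{0\}$ be square-free, let $(\mu,\lambda) \in \mathbb{Z}^2_{\mathrm{prim}}$ with $\mu \neq 0$, set $d = \gcd(a,\mu) \ge 1$, $\mu = \mu_1 d$, $a = a_1 d$. Then for every $B > 0$, $$\#\{(t_0,t_1,t_2,t_3)\in\mathbb{Z}^4_{\mathrm{prim}} : (t_0,t_1)\neq(0,0),\ \lambda t_0 = \mu t_1,\ \mu\lambda t_2 = -(\mu^2+a\lambda^2)t_3,\ t_0t_1t_2+t_3(t_0^2+at_1^2)=0,\ t_0^2+t_1^2+t_2^2+t_3^2 \le B^2\}$$ $$= \#\{(\tau_0,\tau_3)\in\mathbb{Z}^2_{\mathrm{prim}} : \tau_0 \neq 0,\ (\mu^2+\lambda^2)\tau_0^2 + \big((\mu_1^2 d + a_1\lambda^2)^2+(\mu_1\lambda)^2\big)\tau_3^2 \le B^2\}.$$ -/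
/-!
On the line `λ t₀ = μ t₁` with `gcd(μ, λ) = 1` the pair `(t₀, t₁)` is `τ₀ (μ, λ)`. Dividing the second
linear equation by `d` gives `μ₁ λ t₂ = -E t₃` with `E = μ₁² d + a₁ λ²`, and `gcd(μ₁ λ, E) = 1`
because `gcd(a₁, μ₁) = 1`, so `(t₂, t₃) = τ₃ (-E, μ₁ λ)`. On the line the cubic equation is
`τ₀²` times the second linear one, the gcd of `t` is `gcd(τ₀, τ₃)`, and `t₀² + t₁² + t₂² + t₃²` is
the quadratic form in `τ₀, τ₃` on the right-hand side.
-/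

section CommRing

variable {R : Type*} [CommRing R]

theorem IsCoprime.exists_eq_mul_and_eq_mul {p q x y : R} (h : IsCoprime p q)
    (hxy : p * y = q * x) : ∃ τ, x = p * τ ∧ y = q * τ := by
  obtain ⟨u, v, huv⟩ := h
  exact ⟨u * x + v * y, by linear_combination (-v) * hxy - x * huv,
    by linear_combination u * hxy - y * huv⟩

theorem IsCoprime.eq_of_mul_eq_mul {p q x y : R} (h : IsCoprime p q)
    (hp : p * x = p * y) (hq : q * x = q * y) : x = y := by
  obtain ⟨u, v, huv⟩ := h
  linear_combination u * hp + v * hq - (x - y) * huv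

theorem IsCoprime.sq_mul_add_mul_sq {m a d l : R} (hma : IsCoprime m a)
    (hmdl : IsCoprime (m * d) l) : IsCoprime (m ^ 2 * d + a * l ^ 2) (m * l) := by
  -- modulo `m` the first term is `a l²`, modulo `l` it is `m² d`
  refine IsCoprime.mul_right ?_ ?_
  · have := (hma.symm.mul_left (hmdl.of_mul_left_left.symm.pow_left (m := 2))).add_mul_right_left
      (m * d)
    rwa [show a * l ^ 2 + m * d * m = m ^ 2 * d + a * l ^ 2 by ring] at this
  · have := ((hmdl.symm.of_mul_right_left.pow_right (n := 2)).mul_right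
      hmdl.symm.of_mul_right_right).symm.add_mul_right_left (a * l)
    rwa [show m ^ 2 * d + a * l * l = m ^ 2 * d + a * l ^ 2 by ring] at this

def pairScale (p q r s : R) (τ : R × R) : R × R × R × R :=
  (p * τ.1, q * τ.1, r * τ.2, s * τ.2)

variable {p q r s : R}

theorem pairScale_injective (hpq : IsCoprime p q) (hrs : IsCoprime r s) :
    Function.Injective (pairScale p q r s) := by
  rintro ⟨x₀, x₃⟩ ⟨y₀, y₃⟩ h
  simp only [pairScale, Prod.mk.injEq] at h
  obtain ⟨h₀, h₁, h₂, h₃⟩ := h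
  exact Prod.ext (hpq.eq_of_mul_eq_mul h₀ h₁) (hrs.eq_of_mul_eq_mul h₂ h₃)

theorem mem_range_pairScale_iff (hpq : IsCoprime p q) (hrs : IsCoprime r s)
    (t : R × R × R × R) :
    t ∈ Set.range (pairScale p q r s) ↔ p * t.2.1 = q * t.1 ∧ r * t.2.2.2 = s * t.2.2.1 := by
  constructor
  · rintro ⟨τ, rfl⟩
    simp only [pairScale]
    constructor <;> ring
  · rintro ⟨h₀₁, h₂₃⟩
    obtain ⟨τ₀, ht₀, ht₁⟩ := hpq.exists_eq_mul_and_eq_mul h₀₁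
    obtain ⟨τ₃, ht₂, ht₃⟩ := hrs.exists_eq_mul_and_eq_mul h₂₃
    exact ⟨(τ₀, τ₃), by simp only [pairScale, ← ht₀, ← ht₁, ← ht₂, ← ht₃]⟩

end CommRing

theorem Int.isCoprime_of_gcd_mul_right_eq {a b d : ℤ} (hd : d = Int.gcd (a * d) (b * d))
    (hd0 : d ≠ 0) : IsCoprime a b := by
  rw [Int.gcd_mul_right] at hd
  have hnat : d.natAbs = d := Int.natAbs_of_nonneg (by rw [hd]; positivity)
  rw [Nat.cast_mul, hnat] at hd
  rw [Int.isCoprime_iff_gcd_eq_one]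
  exact_mod_cast (mul_eq_right₀ hd0).1 hd.symm

theorem Int.gcd_pairScale {p q r s : ℤ} (hpq : IsCoprime p q) (hrs : IsCoprime r s)
    (τ : ℤ × ℤ) :
    let t := pairScale p q r s τ
    Int.gcd t.1 (Int.gcd t.2.1 (Int.gcd t.2.2.1 t.2.2.2)) = Int.gcd τ.1 τ.2 := by
  rw [Int.isCoprime_iff_gcd_eq_one] at hpq hrs
  simp only [pairScale, mul_comm _ τ.1, mul_comm _ τ.2]
  rw [← Int.gcd_assoc, Int.gcd_mul_left, Int.gcd_mul_left, hpq, hrs]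
  simp [Int.gcd, Int.natAbs_abs]

theorem pairScale_primitive_iff {p q r s : ℤ} (hpq : IsCoprime p q) (hrs : IsCoprime r s)
    (τ : ℤ × ℤ) :
    let t := pairScale p q r s τ
    (t ≠ 0 ∧ Int.gcd t.1 (Int.gcd t.2.1 (Int.gcd t.2.2.1 t.2.2.2)) = 1) ↔
      (τ ≠ 0 ∧ Int.gcd τ.1 τ.2 = 1) := by
  intro t
  have hgcd : Int.gcd t.1 (Int.gcd t.2.1 (Int.gcd t.2.2.1 t.2.2.2)) = Int.gcd τ.1 τ.2 :=
    Int.gcd_pairScale hpq hrs τ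
  rw [hgcd]
  refine and_congr_left fun hτ => ⟨fun _ => ?_, fun _ => ?_⟩
  · rintro rfl
    simp at hτ
  · intro ht
    rw [← hgcd, ht] at hτ
    simp at hτ

theorem mk_mul_mul_eq_zero_iff {R : Type*} [MulZeroClass R] [NoZeroDivisors R] {p q x : R}
    (hp : p ≠ 0) : (p * x, q * x) = (0, 0) ↔ x = 0 := by
  simp only [Prod.mk.injEq, mul_eq_zero, hp, false_or, and_iff_left_iff_imp]
  exact Or.inr

theorem pairScale_sum_sq (p q r s : ℤ) (τ : ℤ × ℤ) :
    let t := pairScale p q r s τ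
    (t.1 : ℝ) ^ 2 + (t.2.1 : ℝ) ^ 2 + (t.2.2.1 : ℝ) ^ 2 + (t.2.2.2 : ℝ) ^ 2 =
      ((p : ℝ) ^ 2 + (q : ℝ) ^ 2) * (τ.1 : ℝ) ^ 2 + ((r : ℝ) ^ 2 + (s : ℝ) ^ 2) * (τ.2 : ℝ) ^ 2 := by
  simp only [pairScale]
  push_cast
  ring

theorem stmt_8_general (a : ℤ)
    (μ lam : ℤ) (hμ : μ ≠ 0) (hprim : Int.gcd μ lam = 1)
    (d μ₁ a₁ : ℤ) (hd : d = Int.gcd a μ)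
    (hμ₁ : μ = μ₁ * d) (ha₁ : a = a₁ * d)
    (B : ℝ) :
    Set.ncard {t : ℤ × ℤ × ℤ × ℤ |
        (t ≠ 0 ∧ Int.gcd t.1 (Int.gcd t.2.1 (Int.gcd t.2.2.1 t.2.2.2)) = 1) ∧
        (t.1, t.2.1) ≠ (0, 0) ∧
        lam * t.1 = μ * t.2.1 ∧
        μ * lam * t.2.2.1 = -((μ ^ 2 + a * lam ^ 2) * t.2.2.2) ∧
        t.1 * t.2.1 * t.2.2.1 + t.2.2.2 * (t.1 ^ 2 + a * t.2.1 ^ 2) = 0 ∧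
        (t.1 : ℝ) ^ 2 + (t.2.1 : ℝ) ^ 2 + (t.2.2.1 : ℝ) ^ 2 + (t.2.2.2 : ℝ) ^ 2 ≤ B ^ 2} =
    Set.ncard {τ : ℤ × ℤ |
        (τ ≠ 0 ∧ Int.gcd τ.1 τ.2 = 1) ∧ τ.1 ≠ 0 ∧
        ((μ : ℝ) ^ 2 + (lam : ℝ) ^ 2) * (τ.1 : ℝ) ^ 2 +
          (((μ₁ : ℝ) ^ 2 * (d : ℝ) + (a₁ : ℝ) * (lam : ℝ) ^ 2) ^ 2 +
            ((μ₁ : ℝ) * (lam : ℝ)) ^ 2) * (τ.2 : ℝ) ^ 2 ≤ B ^ 2} := by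
  have hd0 : d ≠ 0 := by rw [hd]; exact_mod_cast Int.gcd_ne_zero_right hμ
  have hμlam : IsCoprime μ lam := Int.isCoprime_iff_gcd_eq_one.mpr hprim
  have hμ₁a₁ : IsCoprime μ₁ a₁ :=
    (Int.isCoprime_of_gcd_mul_right_eq (by rwa [← ha₁, ← hμ₁]) hd0).symm
  set E := μ₁ ^ 2 * d + a₁ * lam ^ 2
  have hEcop : IsCoprime (-E) (μ₁ * lam) := (hμ₁a₁.sq_mul_add_mul_sq (hμ₁ ▸ hμlam)).neg_left
  have hline : ∀ t₂ t₃ : ℤ,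
      μ * lam * t₂ = -((μ ^ 2 + a * lam ^ 2) * t₃) ↔ -E * t₃ = μ₁ * lam * t₂ := by
    intro t₂ t₃
    subst hμ₁ ha₁
    refine ⟨fun h => mul_left_cancel₀ hd0 ?_, fun h => ?_⟩
    · linear_combination (-1 : ℤ) * h
    · linear_combination (-d) * h
  have hform : ((-E : ℤ) : ℝ) ^ 2 + ((μ₁ * lam : ℤ) : ℝ) ^ 2 =
      ((μ₁ : ℝ) ^ 2 * d + a₁ * lam ^ 2) ^ 2 + (μ₁ * lam) ^ 2 := by
    push_cast [E]
    ring
  refine (congrArg Set.ncard ?_).trans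
    (Set.ncard_image_of_injective _ (pairScale_injective hμlam hEcop))
  ext t
  constructor
  · rintro ⟨hprim, hne, hl₁, hl₂, -, hB⟩
    obtain ⟨τ, rfl⟩ := (mem_range_pairScale_iff hμlam hEcop t).2 ⟨hl₁.symm, (hline _ _).1 hl₂⟩
    rw [pairScale_sum_sq, hform] at hB
    exact ⟨τ, ⟨(pairScale_primitive_iff hμlam hEcop τ).1 hprim,
      mt (mk_mul_mul_eq_zero_iff hμ).2 hne, hB⟩, rfl⟩
  · rintro ⟨τ, ⟨hprim, hτ₀, hB⟩, rfl⟩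
    obtain ⟨hl₁, hl₂⟩ := (mem_range_pairScale_iff hμlam hEcop _).1 ⟨τ, rfl⟩
    have hl₂' := (hline _ _).2 hl₂
    refine ⟨(pairScale_primitive_iff hμlam hEcop τ).2 hprim, mt (mk_mul_mul_eq_zero_iff hμ).1 hτ₀,
      hl₁.symm, hl₂', ?_, by rwa [pairScale_sum_sq, hform]⟩
    simp only [pairScale] at hl₂' ⊢
    linear_combination τ.1 ^ 2 * hl₂'

/-- parametrization of the primitive points of bounded height on the fiber
`V ∩ V_y`, `y = (μ:λ)` with `μ ≠ 0`, of the non-normal cubic surface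
`t₀t₁t₂ + t₃(t₀² + a t₁²) = 0`. -/
theorem stmt_8 (a : ℤ) (ha : a ≠ 0) (hsq : Squarefree a)
    (μ lam : ℤ) (hμ : μ ≠ 0) (hprim : Int.gcd μ lam = 1)
    (d μ₁ a₁ : ℤ) (hd : d = Int.gcd a μ) (hd1 : 1 ≤ d)
    (hμ₁ : μ = μ₁ * d) (ha₁ : a = a₁ * d)
    (B : ℝ) (hB : 0 < B) :
    Set.ncard {t : ℤ × ℤ × ℤ × ℤ |
        (t ≠ 0 ∧ Int.gcd t.1 (Int.gcd t.2.1 (Int.gcd t.2.2.1 t.2.2.2)) = 1) ∧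
        (t.1, t.2.1) ≠ (0, 0) ∧
        lam * t.1 = μ * t.2.1 ∧
        μ * lam * t.2.2.1 = -((μ ^ 2 + a * lam ^ 2) * t.2.2.2) ∧
        t.1 * t.2.1 * t.2.2.1 + t.2.2.2 * (t.1 ^ 2 + a * t.2.1 ^ 2) = 0 ∧
        (t.1 : ℝ) ^ 2 + (t.2.1 : ℝ) ^ 2 + (t.2.2.1 : ℝ) ^ 2 + (t.2.2.2 : ℝ) ^ 2 ≤ B ^ 2} =
    Set.ncard {τ : ℤ × ℤ |
        (τ ≠ 0 ∧ Int.gcd τ.1 τ.2 = 1) ∧ τ.1 ≠ 0 ∧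
        ((μ : ℝ) ^ 2 + (lam : ℝ) ^ 2) * (τ.1 : ℝ) ^ 2 +
          (((μ₁ : ℝ) ^ 2 * (d : ℝ) + (a₁ : ℝ) * (lam : ℝ) ^ 2) ^ 2 +
            ((μ₁ : ℝ) * (lam : ℝ)) ^ 2) * (τ.2 : ℝ) ^ 2 ≤ B ^ 2} :=
  stmt_8_general a μ lam hμ hprim d μ₁ a₁ hd hμ₁ ha₁ B
end

section
/- Let $(\mu,\lambda)\in\mathbb{Z}^2_{\mathrm{prim}}$. Then for every $B > 0$, $$\#\{(t_0,\ldots,t_4)\in\mathbb{Z}^5_{\mathrm{prim}} : (t_0,t_1)\neq(0,0),\ \lambda t_0 = \mu t_1,\ \mu^2 t_2 + \lambda^2 t_3 + \mu\lambda t_4 = 0,\ t_0^2t_2+t_1^2t_3+t_0t_1t_4=0,\ t_0^2+\cdots+t_4^2 \le B^2\}$$ $$= \#\{(\tau_0,\tau_2,\tau_3)\in\mathbb{Z}^3_{\mathrm{prim}} : \tau_0\neq 0,\ (\mu\tau_0)^2+(\lambda\tau_0)^2+(\lambda\tau_2)^2+(\mu\tau_3)^2+(\lambda\tau_3+\mu\tau_2)^2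 \le B^2\}.$$ -/
/-!
Since `gcd(μ, λ) = 1`, the linear equation `λ t₀ = μ t₁` says `(t₀, t₁) = τ₀ (μ, λ)`, and the
integer solutions of `μ² t₂ + λ² t₃ + μλ t₄ = 0` are exactly
`(t₂, t₃, t₄) = (λ τ₂, μ τ₃, -(λ τ₃ + μ τ₂))`. On such points the cubic equation is `τ₀²` times
the quadratic one, hence automatic. The resulting map `τ ↦ t` is a bijection from `ℤ³` onto the
fiber, and both it and its inverse (built from Bézout coefficients) are integer-linear, so it
preserves the gcd of the coordinates; the height of `t` is the quadratic form in `τ`.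
-/

namespace CubicFiber

def param (μ lam : ℤ) (τ : ℤ × ℤ × ℤ) : ℤ × ℤ × ℤ × ℤ × ℤ :=
  (μ * τ.1, lam * τ.1, lam * τ.2.1, μ * τ.2.2, -(lam * τ.2.2 + μ * τ.2.1))

/-- For `a * μ + b * lam = 1` this inverts `param`: the last two coordinates recover `τ₂` and
`τ₃` multiplied by `(a * μ + b * lam) ^ 2`. -/
def unparam (μ lam a b : ℤ) (t : ℤ × ℤ × ℤ × ℤ × ℤ) : ℤ × ℤ × ℤ :=
  (a * t.1 + b * t.2.1,
    (2 * a * b * μ + b ^ 2 * lam) * t.2.2.1 - a ^ 2 * lam * t.2.2.2.1 - a ^ 2 * μ * t.2.2.2.2,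
    (a ^ 2 * μ + 2 * a * b * lam) * t.2.2.2.1 - b ^ 2 * μ * t.2.2.1 - b ^ 2 * lam * t.2.2.2.2)

def fiberPoints (μ lam : ℤ) (B : ℝ) : Set (ℤ × ℤ × ℤ × ℤ × ℤ) :=
  {t : ℤ × ℤ × ℤ × ℤ × ℤ |
    (t ≠ 0 ∧
      Int.gcd t.1 (Int.gcd t.2.1 (Int.gcd t.2.2.1 (Int.gcd t.2.2.2.1 t.2.2.2.2))) = 1) ∧
    (t.1, t.2.1) ≠ (0, 0) ∧
    lam * t.1 = μ * t.2.1 ∧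
    μ ^ 2 * t.2.2.1 + lam ^ 2 * t.2.2.2.1 + μ * lam * t.2.2.2.2 = 0 ∧
    t.1 ^ 2 * t.2.2.1 + t.2.1 ^ 2 * t.2.2.2.1 + t.1 * t.2.1 * t.2.2.2.2 = 0 ∧
    (t.1 : ℝ) ^ 2 + (t.2.1 : ℝ) ^ 2 + (t.2.2.1 : ℝ) ^ 2 + (t.2.2.2.1 : ℝ) ^ 2 +
      (t.2.2.2.2 : ℝ) ^ 2 ≤ B ^ 2}

def paramPoints (μ lam : ℤ) (B : ℝ) : Set (ℤ × ℤ × ℤ) :=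
  {τ : ℤ × ℤ × ℤ |
    (τ ≠ 0 ∧ Int.gcd τ.1 (Int.gcd τ.2.1 τ.2.2) = 1) ∧ τ.1 ≠ 0 ∧
    ((μ : ℝ) * (τ.1 : ℝ)) ^ 2 + ((lam : ℝ) * (τ.1 : ℝ)) ^ 2 +
      ((lam : ℝ) * (τ.2.1 : ℝ)) ^ 2 + ((μ : ℝ) * (τ.2.2 : ℝ)) ^ 2 +
      ((lam : ℝ) * (τ.2.2 : ℝ) + (μ : ℝ) * (τ.2.1 : ℝ)) ^ 2 ≤ B ^ 2}

variable {μ lam a b : ℤ}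

theorem unparam_param (hab : a * μ + b * lam = 1) (τ : ℤ × ℤ × ℤ) :
    unparam μ lam a b (param μ lam τ) = τ := by
  obtain ⟨τ₀, τ₂, τ₃⟩ := τ
  simp only [param, unparam, Prod.mk.injEq]
  refine ⟨?_, ?_, ?_⟩
  · linear_combination τ₀ * hab
  · linear_combination τ₂ * (a * μ + b * lam + 1) * hab
  · linear_combination τ₃ * (a * μ + b * lam + 1) * hab

theorem param_unparam (hab : a * μ + b * lam = 1) {t : ℤ × ℤ × ℤ × ℤ × ℤ}
    (hlin : lam * t.1 = μ * t.2.1)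
    (hquad : μ ^ 2 * t.2.2.1 + lam ^ 2 * t.2.2.2.1 + μ * lam * t.2.2.2.2 = 0) :
    param μ lam (unparam μ lam a b t) = t := by
  obtain ⟨t₀, t₁, t₂, t₃, t₄⟩ := t
  simp only at hlin hquad
  simp only [param, unparam, Prod.mk.injEq]
  refine ⟨?_, ?_, ?_, ?_, ?_⟩
  · linear_combination t₀ * hab - b * hlin
  · linear_combination t₁ * hab + a * hlin
  · linear_combination t₂ * (a * μ + b * lam + 1) * hab - a ^ 2 * hquad
  · linear_combination t₃ * (a * μ + b * lam + 1) * hab - b ^ 2 * hquad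
  · linear_combination t₄ * (a * μ + b * lam + 1) * hab - 2 * a * b * hquad

theorem param_injective (hab : a * μ + b * lam = 1) : Function.Injective (param μ lam) :=
  Function.LeftInverse.injective (unparam_param hab)

theorem dvd_unparam {c : ℤ} {t : ℤ × ℤ × ℤ × ℤ × ℤ}
    (h : c ∣ t.1 ∧ c ∣ t.2.1 ∧ c ∣ t.2.2.1 ∧ c ∣ t.2.2.2.1 ∧ c ∣ t.2.2.2.2) :
    c ∣ (unparam μ lam a b t).1 ∧ c ∣ (unparam μ lam a b t).2.1 ∧
      c ∣ (unparam μ lam a b t).2.2 := by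
  obtain ⟨h₀, h₁, h₂, h₃, h₄⟩ := h
  refine ⟨?_, ?_, ?_⟩ <;> simp only [unparam] <;>
    apply_rules [dvd_add, dvd_sub, dvd_neg.mpr, Dvd.dvd.mul_left]

theorem dvd_param_iff (hab : a * μ + b * lam = 1) (c : ℤ) (τ : ℤ × ℤ × ℤ) :
    (c ∣ (param μ lam τ).1 ∧ c ∣ (param μ lam τ).2.1 ∧ c ∣ (param μ lam τ).2.2.1 ∧
      c ∣ (param μ lam τ).2.2.2.1 ∧ c ∣ (param μ lam τ).2.2.2.2) ↔
      c ∣ τ.1 ∧ c ∣ τ.2.1 ∧ c ∣ τ.2.2 := by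
  constructor
  · intro h
    simpa only [unparam_param hab] using dvd_unparam (μ := μ) (lam := lam) (a := a) (b := b) h
  · rintro ⟨h₀, h₂, h₃⟩
    simp only [param]
    refine ⟨?_, ?_, ?_, ?_, ?_⟩ <;> apply_rules [dvd_neg.mpr, dvd_add, Dvd.dvd.mul_left]

theorem gcd_param (hab : a * μ + b * lam = 1) (τ : ℤ × ℤ × ℤ) :
    Int.gcd (param μ lam τ).1 (Int.gcd (param μ lam τ).2.1 (Int.gcd (param μ lam τ).2.2.1
      (Int.gcd (param μ lam τ).2.2.2.1 (param μ lam τ).2.2.2.2))) =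
      Int.gcd τ.1 (Int.gcd τ.2.1 τ.2.2) :=
  Nat.dvd_left_iff_eq.mp fun d => by
    simpa only [Int.dvd_gcd_iff, Int.dvd_coe_gcd_iff] using dvd_param_iff hab d τ

theorem param_fst_snd_eq_zero_iff (hab : a * μ + b * lam = 1) (τ : ℤ × ℤ × ℤ) :
    ((param μ lam τ).1, (param μ lam τ).2.1) = (0, 0) ↔ τ.1 = 0 := by
  simp only [param, Prod.mk.injEq]
  constructor
  · rintro ⟨h₀, h₁⟩
    linear_combination a * h₀ + b * h₁ - τ.1 * hab
  · intro h
    simp [h]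

theorem height_param (τ : ℤ × ℤ × ℤ) :
    ((param μ lam τ).1 : ℝ) ^ 2 + ((param μ lam τ).2.1 : ℝ) ^ 2 +
      ((param μ lam τ).2.2.1 : ℝ) ^ 2 + ((param μ lam τ).2.2.2.1 : ℝ) ^ 2 +
      ((param μ lam τ).2.2.2.2 : ℝ) ^ 2 =
    ((μ : ℝ) * τ.1) ^ 2 + ((lam : ℝ) * τ.1) ^ 2 + ((lam : ℝ) * τ.2.1) ^ 2 +
      ((μ : ℝ) * τ.2.2) ^ 2 + ((lam : ℝ) * τ.2.2 + (μ : ℝ) * τ.2.1) ^ 2 := by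
  simp only [param]
  push_cast
  ring

theorem param_equations (τ : ℤ × ℤ × ℤ) :
    lam * (param μ lam τ).1 = μ * (param μ lam τ).2.1 ∧
      μ ^ 2 * (param μ lam τ).2.2.1 + lam ^ 2 * (param μ lam τ).2.2.2.1 +
        μ * lam * (param μ lam τ).2.2.2.2 = 0 ∧
      (param μ lam τ).1 ^ 2 * (param μ lam τ).2.2.1 +
        (param μ lam τ).2.1 ^ 2 * (param μ lam τ).2.2.2.1 +
        (param μ lam τ).1 * (param μ lam τ).2.1 * (param μ lam τ).2.2.2.2 = 0 := by
  simp only [param]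
  exact ⟨by ring, by ring, by ring⟩

theorem fiberPoints_subset_range (hab : a * μ + b * lam = 1) (B : ℝ) :
    fiberPoints μ lam B ⊆ Set.range (param μ lam) :=
  fun _ ⟨_, _, hlin, hquad, _⟩ => ⟨_, param_unparam hab hlin hquad⟩

theorem param_preimage_fiberPoints (hab : a * μ + b * lam = 1) (B : ℝ) :
    param μ lam ⁻¹' fiberPoints μ lam B = paramPoints μ lam B := by
  ext τ
  obtain ⟨hlin, hquad, hcubic⟩ := param_equations (μ := μ) (lam := lam) τ
  have hτ : τ.1 ≠ 0 → τ ≠ 0 := fun h h0 => h (by simp [h0])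
  have hparam : τ.1 ≠ 0 → param μ lam τ ≠ 0 := fun h h0 =>
    h ((param_fst_snd_eq_zero_iff hab τ).mp (by simp [h0]))
  simp only [Set.mem_preimage, fiberPoints, paramPoints, Set.mem_ofPred_eq, gcd_param hab,
    height_param, ne_eq, param_fst_snd_eq_zero_iff hab, hlin, hquad, hcubic, true_and]
  tauto

theorem ncard_fiberPoints (h : IsCoprime μ lam) (B : ℝ) :
    (fiberPoints μ lam B).ncard = (paramPoints μ lam B).ncard := by
  obtain ⟨a, b, hab⟩ := h
  rw [← Set.image_preimage_eq_of_subset (fiberPoints_subset_range hab B),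
    param_preimage_fiberPoints hab, Set.ncard_image_of_injective _ (param_injective hab)]

end CubicFiber

theorem stmt_13_general (μ lam : ℤ) (hprim : Int.gcd μ lam = 1)
    (B : ℝ) :
    Set.ncard {t : ℤ × ℤ × ℤ × ℤ × ℤ |
        (t ≠ 0 ∧
          Int.gcd t.1 (Int.gcd t.2.1 (Int.gcd t.2.2.1 (Int.gcd t.2.2.2.1 t.2.2.2.2))) = 1) ∧
        (t.1, t.2.1) ≠ (0, 0) ∧
        lam * t.1 = μ * t.2.1 ∧
        μ ^ 2 * t.2.2.1 + lam ^ 2 * t.2.2.2.1 + μ * lam * t.2.2.2.2 = 0 ∧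
        t.1 ^ 2 * t.2.2.1 + t.2.1 ^ 2 * t.2.2.2.1 + t.1 * t.2.1 * t.2.2.2.2 = 0 ∧
        (t.1 : ℝ) ^ 2 + (t.2.1 : ℝ) ^ 2 + (t.2.2.1 : ℝ) ^ 2 + (t.2.2.2.1 : ℝ) ^ 2 +
          (t.2.2.2.2 : ℝ) ^ 2 ≤ B ^ 2} =
    Set.ncard {τ : ℤ × ℤ × ℤ |
        (τ ≠ 0 ∧ Int.gcd τ.1 (Int.gcd τ.2.1 τ.2.2) = 1) ∧ τ.1 ≠ 0 ∧
        ((μ : ℝ) * (τ.1 : ℝ)) ^ 2 + ((lam : ℝ) * (τ.1 : ℝ)) ^ 2 +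
          ((lam : ℝ) * (τ.2.1 : ℝ)) ^ 2 + ((μ : ℝ) * (τ.2.2 : ℝ)) ^ 2 +
          ((lam : ℝ) * (τ.2.2 : ℝ) + (μ : ℝ) * (τ.2.1 : ℝ)) ^ 2 ≤ B ^ 2} :=
  CubicFiber.ncard_fiberPoints (Int.isCoprime_iff_gcd_eq_one.mpr hprim) B

/-- parametrization of the primitive points of bounded height on the fiber
`V ∩ V_y`, `y = (μ:λ)`, of the non-normal cubic threefold `t₀²t₂ + t₁²t₃ + t₀t₁t₄ = 0`. -/
theorem stmt_13 (μ lam : ℤ) (hp : (μ, lam) ≠ (0, 0)) (hprim : Int.gcd μ lam = 1)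
    (B : ℝ) (hB : 0 < B) :
    Set.ncard {t : ℤ × ℤ × ℤ × ℤ × ℤ |
        (t ≠ 0 ∧
          Int.gcd t.1 (Int.gcd t.2.1 (Int.gcd t.2.2.1 (Int.gcd t.2.2.2.1 t.2.2.2.2))) = 1) ∧
        (t.1, t.2.1) ≠ (0, 0) ∧
        lam * t.1 = μ * t.2.1 ∧
        μ ^ 2 * t.2.2.1 + lam ^ 2 * t.2.2.2.1 + μ * lam * t.2.2.2.2 = 0 ∧
        t.1 ^ 2 * t.2.2.1 + t.2.1 ^ 2 * t.2.2.2.1 + t.1 * t.2.1 * t.2.2.2.2 = 0 ∧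
        (t.1 : ℝ) ^ 2 + (t.2.1 : ℝ) ^ 2 + (t.2.2.1 : ℝ) ^ 2 + (t.2.2.2.1 : ℝ) ^ 2 +
          (t.2.2.2.2 : ℝ) ^ 2 ≤ B ^ 2} =
    Set.ncard {τ : ℤ × ℤ × ℤ |
        (τ ≠ 0 ∧ Int.gcd τ.1 (Int.gcd τ.2.1 τ.2.2) = 1) ∧ τ.1 ≠ 0 ∧
        ((μ : ℝ) * (τ.1 : ℝ)) ^ 2 + ((lam : ℝ) * (τ.1 : ℝ)) ^ 2 +
          ((lam : ℝ) * (τ.2.1 : ℝ)) ^ 2 + ((μ : ℝ) * (τ.2.2 : ℝ)) ^ 2 +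
          ((lam : ℝ) * (τ.2.2 : ℝ) + (μ : ℝ) * (τ.2.1 : ℝ)) ^ 2 ≤ B ^ 2} :=
  stmt_13_general μ lam hprim B
end

section
/- There is a constant $C>0$ such that for all $(\mu,\lambda)\in\mathbb{Z}^2_{\mathrm{prim}}$ and all $B \ge 1$, writing $c = \mu\lambda/(\mu^2+\lambda^2)$: $$\left| \#\{(\tau_0,\tau_2,\tau_3)\in\mathbb{Z}^3 : \tau_0\neq 0,\ (\mu^2+\lambda^2)\big(\tau_0^2 + \tau_2^2 + \tau_3^2 + 2c\,\tau_2\tau_3\big) \le B^2\} - \frac{4\pi B^3}{3\sqrt{1-c^2}\,(\mu^2+\lambda^2)^{3/2}} \right| \le \frac{C\,B^2}{\mu^2+\lambda^2}.$$ -/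
open MeasureTheory Metric Set Real

namespace Stmt14

/-- The quadratic form `x₀² + x₁² + x₂² + 2c·x₁x₂`. -/
noncomputable def q (c : ℝ) (x : Fin 3 → ℝ) : ℝ :=
  x 0 ^ 2 + x 1 ^ 2 + x 2 ^ 2 + 2 * c * x 1 * x 2

lemma q_nonneg {c : ℝ} (hc1 : -(1/2) ≤ c) (hc2 : c ≤ 1/2) (x : Fin 3 → ℝ) : 0 ≤ q c x := by
  simp only [q]
  nlinarith [mul_nonneg (by linarith : (0:ℝ) ≤ 1/2 + c) (sq_nonneg (x 1 - x 2)),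
    mul_nonneg (by linarith : (0:ℝ) ≤ 1/2 - c) (sq_nonneg (x 1 + x 2)), sq_nonneg (x 0)]

lemma q_coord {c : ℝ} (hc1 : -(1/2) ≤ c) (hc2 : c ≤ 1/2) (x : Fin 3 → ℝ) (i : Fin 3) :
    x i ^ 2 ≤ 2 * q c x := by
  have h : x i = x 0 ∨ x i = x 1 ∨ x i = x 2 := by fin_cases i <;> simp
  simp only [q]
  rcases h with h | h | h <;> rw [h] <;>
  nlinarith [mul_nonneg (by linarith : (0:ℝ) ≤ 1/2 + c) (sq_nonneg (x 1 - x 2)),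
    mul_nonneg (by linarith : (0:ℝ) ≤ 1/2 - c) (sq_nonneg (x 1 + x 2)), sq_nonneg (x 0),
    sq_nonneg (x 1), sq_nonneg (x 2)]

lemma q_ge_x0 {c : ℝ} (hc1 : -(1/2) ≤ c) (hc2 : c ≤ 1/2) (x : Fin 3 → ℝ) :
    x 0 ^ 2 ≤ q c x := by
  simp only [q]
  nlinarith [mul_nonneg (by linarith : (0:ℝ) ≤ 1/2 + c) (sq_nonneg (x 1 - x 2)),
    mul_nonneg (by linarith : (0:ℝ) ≤ 1/2 - c) (sq_nonneg (x 1 + x 2))]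

lemma q_le_bound {c : ℝ} (hc1 : -(1/2) ≤ c) (hc2 : c ≤ 1/2) {u : Fin 3 → ℝ}
    (hu : ∀ i, |u i| ≤ 1) : q c u ≤ 4 := by
  have h0 := abs_le.1 (hu 0); have h1 := abs_le.1 (hu 1); have h2 := abs_le.1 (hu 2)
  simp only [q]
  nlinarith [sq_nonneg (u 1 + u 2), sq_nonneg (u 1 - u 2)]

/-- Key perturbation lemma: perturbing by a vector with coordinates bounded by 1
moves the `q`-norm by at most 3. -/
lemma q_add_le {c r : ℝ} (hc1 : -(1/2) ≤ c) (hc2 : c ≤ 1/2) (hr : 0 ≤ r)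
    {x u : Fin 3 → ℝ} (hx : q c x ≤ r ^ 2) (hu : ∀ i, |u i| ≤ 1) :
    q c (x + u) ≤ (r + 3) ^ 2 := by
  set v : Fin 3 → ℝ := fun i => 2 * x i - (r + 1) / 2 * u i with hv
  have hvpos : 0 ≤ q c v := q_nonneg hc1 hc2 v
  have hqu : q c u ≤ 4 := q_le_bound hc1 hc2 hu
  have hqx : 0 ≤ q c x := q_nonneg hc1 hc2 x
  have hval : q c v = 4 * q c x - 2 * (r+1) * (x 0 * u 0 + x 1 * u 1 + x 2 * u 2
      + c * (x 1 * u 2 + x 2 * u 1)) + ((r+1)/2)^2 * q c u := by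
    simp only [q, hv]; ring
  have hadd : q c (x + u) = q c x + 2 * (x 0 * u 0 + x 1 * u 1 + x 2 * u 2
      + c * (x 1 * u 2 + x 2 * u 1)) + q c u := by
    simp only [q, Pi.add_apply]; ring
  have hrpos : (0:ℝ) < r + 1 := by linarith
  nlinarith [mul_pos hrpos hrpos, sq_nonneg (r+1), mul_nonneg hr hr]

/-- Volume of the Euclidean ball of radius `r` in `Fin 3 → ℝ`. -/
lemma volume_T {r : ℝ} (hr : 0 ≤ r) :
    volume {y : Fin 3 → ℝ | y 0 ^ 2 + y 1 ^ 2 + y 2 ^ 2 ≤ r ^ 2} =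
      ENNReal.ofReal (4 * π / 3 * r ^ 3) := by
  have h := MeasureTheory.volume_sum_rpow_le (ι := Fin 3) (p := 2) one_le_two r
  have hset : {x : Fin 3 → ℝ | (∑ i, |x i| ^ (2:ℝ)) ^ ((1:ℝ)/2) ≤ r} =
      {y : Fin 3 → ℝ | y 0 ^ 2 + y 1 ^ 2 + y 2 ^ 2 ≤ r ^ 2} := by
    ext y
    simp only [mem_setOf_eq, Fin.sum_univ_three, Real.rpow_two, sq_abs]
    rw [← Real.sqrt_eq_rpow]
    constructor
    · intro hy
      have := Real.sq_sqrt (by positivity : (0:ℝ) ≤ y 0 ^ 2 + y 1 ^ 2 + y 2 ^ 2)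
      nlinarith [Real.sqrt_nonneg (y 0 ^ 2 + y 1 ^ 2 + y 2 ^ 2)]
    · intro hy
      calc Real.sqrt (y 0 ^ 2 + y 1 ^ 2 + y 2 ^ 2) ≤ Real.sqrt (r ^ 2) :=
            Real.sqrt_le_sqrt hy
        _ = r := Real.sqrt_sq hr
  rw [hset] at h
  rw [h]
  rw [Fintype.card_fin]
  have hG1 : Real.Gamma (1/2 + 1) = Real.sqrt π / 2 := by
    rw [Real.Gamma_add_one (by norm_num), Real.Gamma_one_half_eq]; ring
  have hG2 : Real.Gamma ((3:ℝ)/2 + 1) = 3 / 4 * Real.sqrt π := by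
    have h32 : (3:ℝ)/2 = 1/2 + 1 := by norm_num
    rw [Real.Gamma_add_one (by norm_num), h32, hG1]; ring
  have hc : ((3:ℕ):ℝ) / (2:ℝ) = (3:ℝ)/2 := by norm_num
  rw [hc, hG1, hG2]
  have hπ : (0:ℝ) < π := Real.pi_pos
  have hsqπ : (0:ℝ) < Real.sqrt π := Real.sqrt_pos.2 hπ
  have hconst : (2 * (Real.sqrt π / 2)) ^ 3 / (3 / 4 * Real.sqrt π) = 4 * π / 3 := by
    have : Real.sqrt π ^ 2 = π := Real.sq_sqrt hπ.le
    field_simp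
    nlinarith [this, hsqπ]
  rw [hconst, ← ENNReal.ofReal_pow hr, ← ENNReal.ofReal_mul (by positivity)]
  ring_nf

/-- Volume of the ellipsoid `{q c ≤ r²}`. -/
lemma volume_K {c : ℝ} (hc1 : -(1/2) ≤ c) (hc2 : c ≤ 1/2) {r : ℝ} (hr : 0 ≤ r) :
    volume {x : Fin 3 → ℝ | q c x ≤ r ^ 2} =
      ENNReal.ofReal (4 * π / 3 * r ^ 3 / Real.sqrt (1 - c ^ 2)) := by
  set s := Real.sqrt (1 - c ^ 2) with hs
  have h1c : (0:ℝ) < 1 - c ^ 2 := by nlinarith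
  have hspos : 0 < s := Real.sqrt_pos.2 h1c
  have hs2 : s ^ 2 = 1 - c ^ 2 := Real.sq_sqrt h1c.le
  set M : Matrix (Fin 3) (Fin 3) ℝ := !![1,0,0; 0,1,c; 0,0,s] with hM
  set ψ : (Fin 3 → ℝ) →ₗ[ℝ] (Fin 3 → ℝ) := Matrix.toLin' M with hψ
  have hdet : LinearMap.det ψ = s := by
    rw [hψ, LinearMap.det_toLin', hM, Matrix.det_fin_three]
    simp [Matrix.cons_val_zero, Matrix.cons_val_one]
  have happ : ∀ x : Fin 3 → ℝ, ψ x 0 = x 0 ∧ ψ x 1 = x 1 + c * x 2 ∧ ψ x 2 = s * x 2 := by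
    intro x
    simp [hψ, hM, Matrix.toLin'_apply, Matrix.mulVec, dotProduct, Fin.sum_univ_three]
  have hpre : {x : Fin 3 → ℝ | q c x ≤ r ^ 2} =
      ψ ⁻¹' {y : Fin 3 → ℝ | y 0 ^ 2 + y 1 ^ 2 + y 2 ^ 2 ≤ r ^ 2} := by
    ext x
    obtain ⟨h0, h1, h2⟩ := happ x
    simp only [mem_setOf_eq, Set.mem_preimage, h0, h1, h2, q]
    constructor <;> intro h <;> nlinarith [hs2]
  rw [hpre, MeasureTheory.Measure.addHaar_preimage_linearMap volume
    (by rw [hdet]; exact hspos.ne') _, hdet, volume_T hr,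
    ← ENNReal.ofReal_mul (by positivity)]
  congr 1
  rw [abs_inv, abs_of_nonneg hspos.le, inv_mul_eq_div]

/-- Embedding of integer triples into `Fin 3 → ℝ`. -/
noncomputable def iota (τ : ℤ × ℤ × ℤ) : Fin 3 → ℝ :=
  ![(τ.1 : ℝ), (τ.2.1 : ℝ), (τ.2.2 : ℝ)]

lemma iota_int (τ : ℤ × ℤ × ℤ) (i : Fin 3) : ∃ n : ℤ, iota τ i = (n : ℝ) := by
  fin_cases i
  exacts [⟨τ.1, rfl⟩, ⟨τ.2.1, rfl⟩, ⟨τ.2.2, rfl⟩]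

/-- The half-open unit cube based at an integer point. -/
noncomputable def cube (τ : ℤ × ℤ × ℤ) : Set (Fin 3 → ℝ) :=
  Set.univ.pi fun i => Ico (iota τ i) (iota τ i + 1)

lemma mem_cube {τ : ℤ × ℤ × ℤ} {x : Fin 3 → ℝ} :
    x ∈ cube τ ↔ ∀ i, iota τ i ≤ x i ∧ x i < iota τ i + 1 := by
  simp [cube, Set.mem_pi, Set.mem_Ico]

lemma cube_measurable (τ : ℤ × ℤ × ℤ) : MeasurableSet (cube τ) :=
  MeasurableSet.univ_pi fun _ => measurableSet_Ico

lemma volume_cube (τ : ℤ × ℤ × ℤ) : volume (cube τ) = 1 := by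
  rw [cube, volume_pi_pi]
  simp [Real.volume_Ico]

lemma iota_inj : Function.Injective iota := by
  intro τ σ h
  have h0 : iota τ 0 = iota σ 0 := by rw [h]
  have h1 : iota τ 1 = iota σ 1 := by rw [h]
  have h2 : iota τ 2 = iota σ 2 := by rw [h]
  rw [show iota τ 0 = (τ.1:ℝ) from rfl, show iota σ 0 = (σ.1:ℝ) from rfl] at h0
  rw [show iota τ 1 = (τ.2.1:ℝ) from rfl, show iota σ 1 = (σ.2.1:ℝ) from rfl] at h1
  rw [show iota τ 2 = (τ.2.2:ℝ) from rfl, show iota σ 2 = (σ.2.2:ℝ) from rfl] at h2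
  have e0 : τ.1 = σ.1 := by exact_mod_cast h0
  have e1 : τ.2.1 = σ.2.1 := by exact_mod_cast h1
  have e2 : τ.2.2 = σ.2.2 := by exact_mod_cast h2
  exact Prod.ext e0 (Prod.ext e1 e2)

lemma cube_disjoint {τ σ : ℤ × ℤ × ℤ} (h : τ ≠ σ) : Disjoint (cube τ) (cube σ) := by
  rw [Set.disjoint_left]
  intro x hxτ hxσ
  apply h
  apply iota_inj
  funext i
  obtain ⟨a, ha⟩ := iota_int τ i
  obtain ⟨b, hb⟩ := iota_int σ i
  obtain ⟨hτ1, hτ2⟩ := mem_cube.1 hxτ i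
  obtain ⟨hσ1, hσ2⟩ := mem_cube.1 hxσ i
  rw [ha] at hτ1 hτ2 ⊢; rw [hb] at hσ1 hσ2 ⊢
  have hab : a = b := by
    have h1 : (a:ℝ) < (b:ℝ) + 1 := lt_of_le_of_lt hτ1 hσ2
    have h2 : (b:ℝ) < (a:ℝ) + 1 := lt_of_le_of_lt hσ1 hτ2
    have h1' : a < b + 1 := by exact_mod_cast h1
    have h2' : b < a + 1 := by exact_mod_cast h2
    omega
  rw [hab]

lemma volume_biUnion_cubes (F : Finset (ℤ × ℤ × ℤ)) :
    volume (⋃ τ ∈ F, cube τ) = F.card := by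
  rw [measure_biUnion_finset ?_ (fun τ _ => cube_measurable τ)]
  · simp [volume_cube]
  · intro τ _ σ _ h
    exact cube_disjoint h

lemma coord_bound {R : ℝ} (hR : 0 ≤ R) {t : ℤ} (h : (t:ℝ)^2 ≤ 2*R^2) :
    -⌈2*R⌉ ≤ t ∧ t ≤ ⌈2*R⌉ := by
  have hm : 2*R ≤ (⌈2*R⌉:ℝ) := Int.le_ceil _
  constructor
  · have : -(⌈2*R⌉:ℝ) ≤ (t:ℝ) := by nlinarith
    exact_mod_cast this
  · have : (t:ℝ) ≤ (⌈2*R⌉:ℝ) := by nlinarith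
    exact_mod_cast this

lemma S_finite {c R : ℝ} (hc1 : -(1/2) ≤ c) (hc2 : c ≤ 1/2) (hR : 0 ≤ R) :
    {τ : ℤ × ℤ × ℤ | q c (iota τ) ≤ R^2}.Finite := by
  set m := ⌈2*R⌉
  apply Set.Finite.subset
    ((Finset.Icc (-m) m ×ˢ Finset.Icc (-m) m ×ˢ Finset.Icc (-m) m).finite_toSet)
  intro τ hτ
  simp only [Set.mem_setOf_eq] at hτ
  have h0 : ((τ.1:ℝ))^2 ≤ 2*R^2 := by
    have h := q_coord hc1 hc2 (iota τ) 0
    rw [show iota τ 0 = ((τ.1:ℝ)) from rfl] at h; linarith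
  have h1 : ((τ.2.1:ℝ))^2 ≤ 2*R^2 := by
    have h := q_coord hc1 hc2 (iota τ) 1
    rw [show iota τ 1 = ((τ.2.1:ℝ)) from rfl] at h; linarith
  have h2 : ((τ.2.2:ℝ))^2 ≤ 2*R^2 := by
    have h := q_coord hc1 hc2 (iota τ) 2
    rw [show iota τ 2 = ((τ.2.2:ℝ)) from rfl] at h; linarith
  have b0 := coord_bound hR h0
  have b1 := coord_bound hR h1
  have b2 := coord_bound hR h2
  simp only [Finset.coe_product, Set.mem_prod, Finset.mem_coe, Finset.mem_Icc]
  exact ⟨⟨b0.1, b0.2⟩, ⟨b1.1, b1.2⟩, ⟨b2.1, b2.2⟩⟩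

/-- The sandwich: the number of lattice points in the ellipsoid of "radius" `R` is
between the volumes of the ellipsoids of radii `R - 3` and `R + 3`. -/
lemma card_bounds {c R : ℝ} (hc1 : -(1/2) ≤ c) (hc2 : c ≤ 1/2) (hR : 0 ≤ R)
    (F : Finset (ℤ × ℤ × ℤ)) (hF : ∀ τ, τ ∈ F ↔ q c (iota τ) ≤ R^2) :
    4*π/3*(R-3)^3/Real.sqrt (1-c^2) ≤ (F.card : ℝ) ∧
      (F.card : ℝ) ≤ 4*π/3*(R+3)^3/Real.sqrt (1-c^2) := by
  have h1c : (0:ℝ) < 1 - c ^ 2 := by nlinarith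
  have hspos : 0 < Real.sqrt (1 - c^2) := Real.sqrt_pos.2 h1c
  constructor
  · rcases lt_or_ge R 3 with hR3 | hR3
    · have hneg : (R-3)^3 ≤ 0 := Odd.pow_nonpos (by decide) (by linarith)
      have : 4*π/3*(R-3)^3/Real.sqrt (1-c^2) ≤ 0 := by
        apply div_nonpos_of_nonpos_of_nonneg _ hspos.le
        have hπ : (0:ℝ) < 4*π/3 := by positivity
        nlinarith
      exact this.trans (Nat.cast_nonneg _)
    · have hsub : {x : Fin 3 → ℝ | q c x ≤ (R-3)^2} ⊆ ⋃ τ ∈ F, cube τ := by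
        intro x hx
        simp only [Set.mem_setOf_eq] at hx
        set τ : ℤ × ℤ × ℤ := (⌊x 0⌋, ⌊x 1⌋, ⌊x 2⌋) with hτ
        have hiota : ∀ i, iota τ i = (⌊x i⌋ : ℝ) := by
          intro i; fin_cases i <;> rfl
        have hmem : τ ∈ F := by
          rw [hF]
          have hu : ∀ i, |iota τ i - x i| ≤ 1 := by
            intro i
            rw [hiota i, abs_le]
            constructor
            · linarith [Int.sub_one_lt_floor (x i)]
            · linarith [Int.floor_le (x i)]
          have := q_add_le hc1 hc2 (by linarith : (0:ℝ) ≤ R - 3) hx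
            (u := fun i => iota τ i - x i) hu
          have hxe : x + (fun i => iota τ i - x i) = iota τ := by
            funext i; simp
          rw [hxe] at this
          calc q c (iota τ) ≤ (R - 3 + 3)^2 := this
            _ = R^2 := by ring
        refine Set.mem_biUnion hmem ?_
        rw [mem_cube]
        intro i
        rw [hiota i]
        exact ⟨Int.floor_le (x i), by linarith [Int.lt_floor_add_one (x i)]⟩
      have hmono := measure_mono (μ := (volume : Measure (Fin 3 → ℝ))) hsub
      rw [volume_K hc1 hc2 (by linarith : (0:ℝ) ≤ R - 3), volume_biUnion_cubes F] at hmono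
      have : ENNReal.ofReal (4*π/3*(R-3)^3/Real.sqrt (1-c^2)) ≤
          ENNReal.ofReal ((F.card : ℝ)) := by
        rwa [ENNReal.ofReal_natCast]
      exact (ENNReal.ofReal_le_ofReal_iff (Nat.cast_nonneg _)).1 this
  · have hsub : (⋃ τ ∈ F, cube τ) ⊆ {x : Fin 3 → ℝ | q c x ≤ (R+3)^2} := by
      intro x hx
      simp only [Set.mem_iUnion] at hx
      obtain ⟨τ, hτF, hxc⟩ := hx
      have hτ : q c (iota τ) ≤ R^2 := (hF τ).1 hτF
      have hu : ∀ i, |x i - iota τ i| ≤ 1 := by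
        intro i
        obtain ⟨hl, hr⟩ := mem_cube.1 hxc i
        rw [abs_le]; constructor <;> linarith
      have := q_add_le hc1 hc2 hR hτ (u := fun i => x i - iota τ i) hu
      have hxe : iota τ + (fun i => x i - iota τ i) = x := by
        funext i; simp
      rwa [hxe] at this
    have hmono := measure_mono (μ := (volume : Measure (Fin 3 → ℝ))) hsub
    rw [volume_K hc1 hc2 (by linarith : (0:ℝ) ≤ R + 3), volume_biUnion_cubes F] at hmono
    have : ENNReal.ofReal ((F.card : ℝ)) ≤
        ENNReal.ofReal (4*π/3*(R+3)^3/Real.sqrt (1-c^2)) := by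
      rwa [ENNReal.ofReal_natCast]
    exact (ENNReal.ofReal_le_ofReal_iff (by positivity)).1 this

/-- Count of lattice points in the hyperplane `τ₀ = 0` slice. -/
lemma plane_card_le {c R : ℝ} (hc1 : -(1/2) ≤ c) (hc2 : c ≤ 1/2) (hR : 0 ≤ R) :
    (({τ : ℤ × ℤ × ℤ | τ.1 = 0 ∧ q c (iota τ) ≤ R^2}).ncard : ℝ) ≤ (4*R+3)^2 := by
  set m := ⌈2*R⌉ with hm
  have hm0 : 0 ≤ m := Int.ceil_nonneg (by linarith)
  have hmle : (m:ℝ) < 2*R + 1 := by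
    have := Int.ceil_lt_add_one (2*R); linarith
  set G : Finset (ℤ × ℤ × ℤ) := {0} ×ˢ Finset.Icc (-m) m ×ˢ Finset.Icc (-m) m with hG
  have hsub : {τ : ℤ × ℤ × ℤ | τ.1 = 0 ∧ q c (iota τ) ≤ R^2} ⊆ ↑G := by
    intro τ ⟨hτ0, hτ⟩
    have h1 : ((τ.2.1:ℝ))^2 ≤ 2*R^2 := by
      have h := q_coord hc1 hc2 (iota τ) 1
      rw [show iota τ 1 = ((τ.2.1:ℝ)) from rfl] at h; linarith
    have h2 : ((τ.2.2:ℝ))^2 ≤ 2*R^2 := by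
      have h := q_coord hc1 hc2 (iota τ) 2
      rw [show iota τ 2 = ((τ.2.2:ℝ)) from rfl] at h; linarith
    have b1 := coord_bound hR h1
    have b2 := coord_bound hR h2
    simp only [hG, Finset.coe_product, Set.mem_prod, Finset.mem_coe, Finset.mem_Icc,
      Finset.coe_singleton, Set.mem_singleton_iff]
    exact ⟨hτ0, ⟨b1.1, b1.2⟩, ⟨b2.1, b2.2⟩⟩
  have hncard : ({τ : ℤ × ℤ × ℤ | τ.1 = 0 ∧ q c (iota τ) ≤ R^2}).ncard ≤ G.card := by
    rw [← Set.ncard_coe_finset]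
    exact Set.ncard_le_ncard hsub (Finset.finite_toSet G)
  have h21 : (Finset.Icc (-m) m).card = (2*m+1).toNat := by
    rw [Int.card_Icc]; congr 1; ring
  have hcard : G.card = 1 * (2*m+1).toNat * (2*m+1).toNat := by
    rw [hG, Finset.card_product, Finset.card_product, Finset.card_singleton, h21]
    ring
  have hc1R : ((2*m+1).toNat : ℝ) ≤ 4*R + 3 := by
    have : ((2*m+1).toNat : ℤ) = 2*m+1 := Int.toNat_of_nonneg (by omega)
    have h2 : (((2*m+1).toNat : ℤ) : ℝ) = 2*(m:ℝ)+1 := by rw [this]; push_cast; ring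
    push_cast at h2 ⊢
    rw [h2]; linarith
  calc (({τ : ℤ × ℤ × ℤ | τ.1 = 0 ∧ q c (iota τ) ≤ R^2}).ncard : ℝ) ≤ (G.card : ℝ) := by
        exact_mod_cast hncard
    _ = ((2*m+1).toNat : ℝ) * ((2*m+1).toNat : ℝ) := by rw [hcard]; push_cast; ring
    _ ≤ (4*R+3) * (4*R+3) :=
        mul_le_mul hc1R hc1R (Nat.cast_nonneg _) (by linarith)
    _ = (4*R+3)^2 := by ring

lemma err1 {R s : ℝ} (hR1 : 1 ≤ R) (hs : 1/2 ≤ s) (hspos : 0 < s) :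
    4*π/3*((R+3)^3 - R^3)/s ≤ 672 * R^2 := by
  rw [div_le_iff₀ hspos]
  nlinarith [Real.pi_le_four, Real.pi_pos,
    mul_le_mul_of_nonneg_right Real.pi_le_four (by nlinarith : (0:ℝ) ≤ 9*R^2+27*R+27),
    mul_nonneg (by linarith : (0:ℝ) ≤ R - 1) (by linarith : (0:ℝ) ≤ R + 1),
    mul_nonneg (by linarith : (0:ℝ) ≤ R - 1) (by linarith : (0:ℝ) ≤ R),
    mul_nonneg (sq_nonneg R) (by linarith : (0:ℝ) ≤ s - 1/2)]

lemma err2 {R s : ℝ} (hR1 : 1 ≤ R) (hs : 1/2 ≤ s) (hspos : 0 < s) :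
    4*π/3*(R^3 - (R-3)^3)/s ≤ 672 * R^2 := by
  rw [div_le_iff₀ hspos]
  nlinarith [Real.pi_le_four, Real.pi_pos, sq_nonneg (2*R-3),
    mul_le_mul_of_nonneg_right Real.pi_le_four
      (by nlinarith [sq_nonneg (2*R-3)] : (0:ℝ) ≤ 9*R^2-27*R+27),
    mul_nonneg (by linarith : (0:ℝ) ≤ R - 1) (by linarith : (0:ℝ) ≤ R + 1),
    mul_nonneg (by linarith : (0:ℝ) ≤ R - 1) (by linarith : (0:ℝ) ≤ R),
    mul_nonneg (sq_nonneg R) (by linarith : (0:ℝ) ≤ s - 1/2)]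

lemma err3 {R s : ℝ} (hR0 : 0 ≤ R) (hR1 : R < 1) (hs : 1/2 ≤ s) (hspos : 0 < s) :
    4*π/3*R^3/s ≤ 1000 * R^2 := by
  rw [div_le_iff₀ hspos]
  nlinarith [Real.pi_le_four, Real.pi_pos, mul_nonneg (mul_nonneg hR0 hR0) hR0, sq_nonneg R,
    mul_nonneg (sq_nonneg R) (by linarith : (0:ℝ) ≤ s - 1/2),
    mul_nonneg (mul_nonneg hR0 hR0) (by linarith : (0:ℝ) ≤ 1 - R)]

lemma err4 {R : ℝ} (hR1 : 1 ≤ R) : (4*R+3)^2 ≤ 49 * R^2 := by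
  nlinarith [mul_nonneg (by linarith : (0:ℝ) ≤ R - 1) (by linarith : (0:ℝ) ≤ R + 1),
    mul_nonneg (by linarith : (0:ℝ) ≤ R - 1) (by linarith : (0:ℝ) ≤ R)]

lemma sq_lt_one' {R : ℝ} (h0 : 0 ≤ R) (h1 : R < 1) : R^2 < 1 := by nlinarith

end Stmt14

set_option maxHeartbeats 2000000 in
open Stmt14 MeasureTheory Set Real in
/-- uniform count with error term of integer parameter triples on the
fibers of the non-normal cubic threefold `t₀²t₂ + t₁²t₃ + t₀t₁t₄ = 0`:
`N*(V_y,B) = 4πB³/(3√(1−c²)(μ²+λ²)^{3/2}) + O(B²/(μ²+λ²))` with `c = μλ/(μ²+λ²)`. -/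
theorem stmt_14 :
    ∃ C : ℝ, 0 < C ∧
      ∀ μ lam : ℤ, (μ, lam) ≠ (0, 0) → Int.gcd μ lam = 1 →
      ∀ B : ℝ, 1 ≤ B →
        |(Set.ncard {τ : ℤ × ℤ × ℤ | τ.1 ≠ 0 ∧
            ((μ : ℝ) ^ 2 + (lam : ℝ) ^ 2) *
              ((τ.1 : ℝ) ^ 2 + (τ.2.1 : ℝ) ^ 2 + (τ.2.2 : ℝ) ^ 2 +
                2 * ((μ : ℝ) * (lam : ℝ) / ((μ : ℝ) ^ 2 + (lam : ℝ) ^ 2)) *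
                  (τ.2.1 : ℝ) * (τ.2.2 : ℝ)) ≤ B ^ 2} : ℝ) -
          4 * Real.pi * B ^ 3 /
            (3 * Real.sqrt (1 - ((μ : ℝ) * (lam : ℝ) / ((μ : ℝ) ^ 2 + (lam : ℝ) ^ 2)) ^ 2) *
              ((μ : ℝ) ^ 2 + (lam : ℝ) ^ 2) ^ ((3 : ℝ) / 2))| ≤
          C * B ^ 2 / ((μ : ℝ) ^ 2 + (lam : ℝ) ^ 2) := by
  refine ⟨1000, by norm_num, ?_⟩
  intro μ lam hml _hgcd B hB
  set A : ℝ := (μ : ℝ) ^ 2 + (lam : ℝ) ^ 2 with hAdef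
  have hA1 : (1:ℝ) ≤ A := by
    have hne : μ ≠ 0 ∨ lam ≠ 0 := by
      by_contra hcon
      push_neg at hcon
      exact hml (by simp [hcon.1, hcon.2])
    have h1 : (1:ℤ) ≤ μ^2 + lam^2 := by
      rcases hne with h | h
      · nlinarith [Int.one_le_abs h, sq_abs μ, sq_nonneg lam, abs_nonneg μ]
      · nlinarith [Int.one_le_abs h, sq_abs lam, sq_nonneg μ, abs_nonneg lam]
    have : ((1:ℤ):ℝ) ≤ ((μ^2 + lam^2 : ℤ) : ℝ) := by exact_mod_cast h1
    push_cast at this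
    linarith
  have hApos : (0:ℝ) < A := by linarith
  set c : ℝ := (μ : ℝ) * (lam : ℝ) / A with hcdef
  have hc2 : c ≤ 1/2 := by
    rw [hcdef, div_le_iff₀ hApos]
    nlinarith [sq_nonneg ((μ:ℝ) - (lam:ℝ))]
  have hc1 : -(1/2) ≤ c := by
    rw [hcdef, le_div_iff₀ hApos]
    nlinarith [sq_nonneg ((μ:ℝ) + (lam:ℝ))]
  have h1c : (0:ℝ) < 1 - c ^ 2 := by nlinarith
  set s : ℝ := Real.sqrt (1 - c ^ 2) with hsdef
  have hspos : 0 < s := Real.sqrt_pos.2 h1c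
  have hs2 : s ^ 2 = 1 - c ^ 2 := Real.sq_sqrt h1c.le
  have hs_half : 1/2 ≤ s := by nlinarith
  set sA : ℝ := Real.sqrt A with hsAdef
  have hsApos : 0 < sA := Real.sqrt_pos.2 hApos
  have hsA2 : sA ^ 2 = A := Real.sq_sqrt hApos.le
  set R : ℝ := B / sA with hRdef
  have hRpos : 0 < R := div_pos (by linarith) hsApos
  have hR0 : (0:ℝ) ≤ R := hRpos.le
  have hR2 : R ^ 2 = B ^ 2 / A := by rw [hRdef, div_pow, hsA2]
  -- identify the counting set
  have hcond : ∀ τ : ℤ × ℤ × ℤ,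
      (A * ((τ.1 : ℝ) ^ 2 + (τ.2.1 : ℝ) ^ 2 + (τ.2.2 : ℝ) ^ 2 +
        2 * c * (τ.2.1 : ℝ) * (τ.2.2 : ℝ)) ≤ B ^ 2) ↔ q c (iota τ) ≤ R ^ 2 := by
    intro τ
    have hq : q c (iota τ) = (τ.1 : ℝ) ^ 2 + (τ.2.1 : ℝ) ^ 2 + (τ.2.2 : ℝ) ^ 2 +
        2 * c * (τ.2.1 : ℝ) * (τ.2.2 : ℝ) := rfl
    rw [hq, hR2, le_div_iff₀ hApos, mul_comm]
  have hsetT : {τ : ℤ × ℤ × ℤ | τ.1 ≠ 0 ∧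
      A * ((τ.1 : ℝ) ^ 2 + (τ.2.1 : ℝ) ^ 2 + (τ.2.2 : ℝ) ^ 2 +
        2 * c * (τ.2.1 : ℝ) * (τ.2.2 : ℝ)) ≤ B ^ 2} =
      {τ : ℤ × ℤ × ℤ | τ.1 ≠ 0 ∧ q c (iota τ) ≤ R ^ 2} := by
    ext τ
    simp only [Set.mem_setOf_eq]
    rw [hcond τ]
  rw [hsetT]
  -- main term simplification
  have hA32 : A ^ ((3:ℝ)/2) = sA ^ 3 := by
    rw [show ((3:ℝ)/2) = (1/2) * 3 by norm_num, Real.rpow_mul hApos.le,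
      ← Real.sqrt_eq_rpow, ← hsAdef,
      show ((3:ℝ)) = ((3:ℕ):ℝ) by norm_num, Real.rpow_natCast]
  have hMain : 4 * Real.pi * B ^ 3 / (3 * s * A ^ ((3:ℝ)/2)) = 4*π/3*R^3/s := by
    rw [hA32, hRdef]
    field_simp
  rw [hMain]
  have hRHS : 1000 * B ^ 2 / A = 1000 * R ^ 2 := by rw [hR2]; ring
  rw [hRHS]
  -- sets
  set S : Set (ℤ × ℤ × ℤ) := {τ | q c (iota τ) ≤ R ^ 2} with hSdef
  set T : Set (ℤ × ℤ × ℤ) := {τ | τ.1 ≠ 0 ∧ q c (iota τ) ≤ R ^ 2} with hTdef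
  set P : Set (ℤ × ℤ × ℤ) := {τ | τ.1 = 0 ∧ q c (iota τ) ≤ R ^ 2} with hPdef
  have hS : S.Finite := S_finite hc1 hc2 hR0
  have hT : T.Finite := hS.subset (fun τ h => h.2)
  have hP : P.Finite := hS.subset (fun τ h => h.2)
  have hunion : S = T ∪ P := by
    ext τ
    simp only [hSdef, hTdef, hPdef, Set.mem_setOf_eq, Set.mem_union]
    tauto
  have hdisj : Disjoint T P := by
    rw [Set.disjoint_left]
    rintro τ ⟨h1, _⟩ ⟨h2, _⟩
    exact h1 h2
  have hsplit : S.ncard = T.ncard + P.ncard := by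
    rw [hunion, Set.ncard_union_eq hdisj hT hP]
  have hπ4 : π ≤ 4 := Real.pi_le_four
  have hπ0 : (0:ℝ) < π := Real.pi_pos
  rcases lt_or_ge R 1 with hR1 | hR1
  · -- small radius: the set is empty
    have hTempty : T = ∅ := by
      ext τ
      simp only [hTdef, Set.mem_setOf_eq, Set.mem_empty_iff_false, iff_false, not_and]
      intro h0 hq
      exfalso
      have h1 : (1:ℝ) ≤ (τ.1:ℝ)^2 := by
        have : (1:ℤ) ≤ τ.1^2 := by nlinarith [Int.one_le_abs h0, sq_abs τ.1, abs_nonneg τ.1]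
        exact_mod_cast this
      have h2 := q_ge_x0 hc1 hc2 (iota τ)
      rw [show iota τ 0 = (τ.1:ℝ) from rfl] at h2
      linarith [sq_lt_one' hR0 hR1]
    rw [hTempty, Set.ncard_empty]
    rw [show ((0:ℕ):ℝ) - 4*π/3*R^3/s = -(4*π/3*R^3/s) by push_cast; ring, abs_neg,
      abs_of_nonneg (by positivity)]
    linarith [err3 hR0 hR1 hs_half hspos]
  · -- main case
    set F : Finset (ℤ × ℤ × ℤ) := hS.toFinset with hFdef
    have hF : ∀ τ, τ ∈ F ↔ q c (iota τ) ≤ R^2 := by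
      intro τ
      rw [hFdef, Set.Finite.mem_toFinset]
      rfl
    obtain ⟨hlow, hup⟩ := card_bounds hc1 hc2 hR0 F hF
    have hSF : S.ncard = F.card := by
      rw [hFdef, Set.ncard_eq_toFinset_card S hS]
    have hPle : (P.ncard : ℝ) ≤ (4*R+3)^2 := plane_card_le hc1 hc2 hR0
    have hP0 : (0:ℝ) ≤ (P.ncard : ℝ) := Nat.cast_nonneg _
    have hTN : (T.ncard : ℝ) = (S.ncard : ℝ) - (P.ncard : ℝ) := by
      have := hsplit
      push_cast [this]
      ring
    rw [← hSF] at hlow hup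
    -- a priori bounds against the main term
    set N : ℝ := (S.ncard : ℝ) with hNdef
    set M : ℝ := 4*π/3*R^3/s with hMdef
    have hupp : N - M ≤ 672 * R^2 := by
      have hd : 4*π/3*(R+3)^3/s - 4*π/3*R^3/s = 4*π/3*((R+3)^3 - R^3)/s := by ring
      have h1 : N - M ≤ 4*π/3*((R+3)^3 - R^3)/s := by
        rw [← hd]
        have := hlow
        linarith [hup]
      have h2 : 4*π/3*((R+3)^3 - R^3)/s ≤ 672 * R^2 := err1 hR1 hs_half hspos
      linarith
    have hlowm : M - N ≤ 672 * R^2 := by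
      have hd : 4*π/3*R^3/s - 4*π/3*(R-3)^3/s = 4*π/3*(R^3 - (R-3)^3)/s := by ring
      have h1 : M - N ≤ 4*π/3*(R^3 - (R-3)^3)/s := by
        rw [← hd]
        linarith [hlow]
      have h2 : 4*π/3*(R^3 - (R-3)^3)/s ≤ 672 * R^2 := err2 hR1 hs_half hspos
      linarith
    have hP49 : (P.ncard : ℝ) ≤ 49 * R^2 := by
      linarith [err4 hR1]
    rw [abs_le]
    constructor
    · rw [hTN]
      linarith
    · rw [hTN]
      linarith
end

section
/- For all real numbers $\mu, \lambda$ with $(\mu,\lambda)\neq(0,0)$, $$\int_{\mathbb{R}^2} \frac{dx\,dy}{\big((\lambda^2+\mu^2)(1+x^2+y^2) + 2\mu\lambda\, xy\big)^{3/2}} = \frac{2\pi}{\sqrt{(\lambda^2+\mu^2)(\lambda^4+\lambda^2\mu^2+\mu^4)}}.$$ -/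
/-!
Completing the square in `y` writes the quadratic form as
`a ((y + (b/a) x)² + (1 + c x²))` with `c = (a² - b²) / a²`. The inner integral is then
a translate of `∫ dy / (y² + C) ^ (3/2) = 2 / C` (antiderivative `y / (C √(y² + C))`), and the
outer one is the Cauchy integral `∫ dx / (1 + c x²) = π / √c`. For `a = λ² + μ²`, `b = μλ` one
has `a² - b² = λ⁴ + λ²μ² + μ⁴`.
-/

open MeasureTheory Real Filter Topology

lemma rpow_three_halves {x : ℝ} (hx : 0 ≤ x) : x ^ ((3 : ℝ) / 2) = x * √x := by
  rw [show (3 : ℝ) / 2 = 1 + 1 / 2 by norm_num, rpow_add' hx (by norm_num), rpow_one,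
    sqrt_eq_rpow]

lemma integrable_inv_one_add_mul_sq {c : ℝ} (hc : 0 < c) :
    Integrable fun x : ℝ => (1 + c * x ^ 2)⁻¹ := by
  have h := integrable_inv_one_add_sq.comp_mul_left' (sqrt_pos.2 hc).ne'
  simpa only [Function.comp_def, mul_pow, sq_sqrt hc.le] using h

lemma integral_inv_one_add_mul_sq {c : ℝ} (hc : 0 < c) :
    ∫ x : ℝ, (1 + c * x ^ 2)⁻¹ = π / √c := by
  have h := Measure.integral_comp_mul_left (fun y : ℝ => (1 + y ^ 2)⁻¹) √c
  simp only [mul_pow, sq_sqrt hc.le] at h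
  rw [h, integral_univ_inv_one_add_sq, smul_eq_mul, abs_of_pos (inv_pos.2 (sqrt_pos.2 hc)),
    inv_mul_eq_div]

lemma hasDerivAt_div_mul_sqrt_sq_add {C : ℝ} (hC : 0 < C) (y : ℝ) :
    HasDerivAt (fun y => y / (C * √(y ^ 2 + C))) (1 / (y ^ 2 + C) ^ ((3 : ℝ) / 2)) y := by
  have hS : 0 < y ^ 2 + C := by positivity
  have hsqrt := (((hasDerivAt_pow 2 y).add_const C).sqrt hS.ne').const_mul C
  refine ((hasDerivAt_id y).div hsqrt (by positivity)).congr_deriv ?_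
  rw [rpow_three_halves hS.le]
  field_simp
  rw [sq_sqrt hS.le]
  simp only [id_eq, Nat.cast_ofNat, Nat.add_one_sub_one, pow_one]
  ring

lemma tendsto_div_mul_sqrt_sq_add_atTop {C : ℝ} (hC : 0 < C) :
    Tendsto (fun y => y / (C * √(y ^ 2 + C))) atTop (𝓝 (1 / C)) := by
  have h : Tendsto (fun y : ℝ => √(1 - C / (y ^ 2 + C)) / C) atTop (𝓝 (√(1 - 0) / C)) := by
    refine ((continuous_sqrt.tendsto _).comp (tendsto_const_nhds.sub ?_)).div_const C
    exact tendsto_const_nhds.div_atTop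
      (tendsto_atTop_add_const_right _ C (tendsto_pow_atTop two_ne_zero))
  rw [sub_zero, sqrt_one] at h
  refine h.congr' ?_
  filter_upwards [eventually_gt_atTop 0] with y hy
  have hS : 0 < y ^ 2 + C := by positivity
  rw [show 1 - C / (y ^ 2 + C) = y ^ 2 / (y ^ 2 + C) by field_simp; ring,
    sqrt_div (sq_nonneg y), sqrt_sq hy.le, div_div, mul_comm]

lemma tendsto_div_mul_sqrt_sq_add_atBot {C : ℝ} (hC : 0 < C) :
    Tendsto (fun y => y / (C * √(y ^ 2 + C))) atBot (𝓝 (-(1 / C))) := by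
  refine (((tendsto_div_mul_sqrt_sq_add_atTop hC).comp tendsto_neg_atBot_atTop).neg).congr ?_
  intro y
  simp only [Function.comp_apply, neg_sq, neg_div, neg_neg]

lemma one_div_sq_add_rpow_three_halves_le {C : ℝ} (hC : 0 < C) (y : ℝ) :
    1 / (y ^ 2 + C) ^ ((3 : ℝ) / 2) ≤ (C * √C)⁻¹ * (1 + C⁻¹ * y ^ 2)⁻¹ := by
  have hS : 0 < y ^ 2 + C := by positivity
  rw [rpow_three_halves hS.le, ← mul_inv, one_div]
  refine inv_anti₀ (by positivity) ?_
  calc C * √C * (1 + C⁻¹ * y ^ 2) = (y ^ 2 + C) * √C := by field_simp; ring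
    _ ≤ (y ^ 2 + C) * √(y ^ 2 + C) := by gcongr; linarith [sq_nonneg y]

lemma integrable_one_div_sq_add_rpow_three_halves {C : ℝ} (hC : 0 < C) :
    Integrable fun y : ℝ => 1 / (y ^ 2 + C) ^ ((3 : ℝ) / 2) := by
  refine ((integrable_inv_one_add_mul_sq (inv_pos.2 hC)).const_mul (C * √C)⁻¹).mono'
    (by fun_prop : Measurable _).aestronglyMeasurable ?_
  filter_upwards with y
  rw [norm_of_nonneg (by positivity)]
  exact one_div_sq_add_rpow_three_halves_le hC y

lemma integral_one_div_sq_add_rpow_three_halves {C : ℝ} (hC : 0 < C) :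
    ∫ y : ℝ, 1 / (y ^ 2 + C) ^ ((3 : ℝ) / 2) = 2 / C := by
  rw [integral_of_hasDerivAt_of_tendsto (hasDerivAt_div_mul_sqrt_sq_add hC)
    (integrable_one_div_sq_add_rpow_three_halves hC) (tendsto_div_mul_sqrt_sq_add_atBot hC)
    (tendsto_div_mul_sqrt_sq_add_atTop hC)]
  ring

lemma integral_prod_eq_integral_of_integral_eq {α β : Type*} [MeasurableSpace α]
    [MeasurableSpace β] {μ : Measure α} {ν : Measure β} [SFinite μ] [SFinite ν]
    {f : α × β → ℝ} {g : α → ℝ} (hf : AEStronglyMeasurable f (μ.prod ν)) (hf_nonneg : 0 ≤ f)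
    (hf_int : ∀ x, Integrable (fun y => f (x, y)) ν) (hfg : ∀ x, ∫ y, f (x, y) ∂ν = g x)
    (hg : Integrable g μ) :
    ∫ p, f p ∂(μ.prod ν) = ∫ x, g x ∂μ := by
  have hf_norm : ∀ x, ∫ y, ‖f (x, y)‖ ∂ν = g x := fun x => by
    simp only [norm_of_nonneg (hf_nonneg _), hfg]
  rw [integral_prod f
    ((integrable_prod_iff hf).2 ⟨ae_of_all _ hf_int, by simpa only [hf_norm]⟩)]
  simp only [hfg]

lemma integral_one_div_quadratic_rpow_three_halves {a b : ℝ} (ha : 0 < a)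
    (hab : b ^ 2 < a ^ 2) :
    ∫ p : ℝ × ℝ, 1 / (a * (1 + p.1 ^ 2 + p.2 ^ 2) + 2 * b * p.1 * p.2) ^ ((3 : ℝ) / 2) =
      2 * π / √(a * (a ^ 2 - b ^ 2)) := by
  set c := (a ^ 2 - b ^ 2) / a ^ 2 with hc_def
  have hc : 0 < c := div_pos (by linarith) (by positivity)
  have hsq : ∀ x y : ℝ, a * (1 + x ^ 2 + y ^ 2) + 2 * b * x * y =
      a * ((y + b / a * x) ^ 2 + (1 + c * x ^ 2)) := fun x y => by
    rw [hc_def]; field_simp; ring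
  have hintegrand : ∀ x y : ℝ, 1 / (a * (1 + x ^ 2 + y ^ 2) + 2 * b * x * y) ^ ((3 : ℝ) / 2) =
      (a ^ ((3 : ℝ) / 2))⁻¹ * (1 / ((y + b / a * x) ^ 2 + (1 + c * x ^ 2)) ^ ((3 : ℝ) / 2)) :=
    fun x y => by rw [hsq, mul_rpow ha.le (by positivity), one_div, one_div, mul_inv]
  have hinner : ∀ x : ℝ,
      ∫ y, (a ^ ((3 : ℝ) / 2))⁻¹ * (1 / ((y + b / a * x) ^ 2 + (1 + c * x ^ 2)) ^ ((3 : ℝ) / 2))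
        = (a ^ ((3 : ℝ) / 2))⁻¹ * (2 * (1 + c * x ^ 2)⁻¹) := fun x => by
    rw [integral_const_mul, integral_add_right_eq_self
      (fun z => 1 / (z ^ 2 + (1 + c * x ^ 2)) ^ ((3 : ℝ) / 2)),
      integral_one_div_sq_add_rpow_three_halves (by positivity), div_eq_mul_inv (2 : ℝ)]
  simp_rw [hintegrand]
  rw [Measure.volume_eq_prod, integral_prod_eq_integral_of_integral_eq (g := fun x =>
      (a ^ ((3 : ℝ) / 2))⁻¹ * (2 * (1 + c * x ^ 2)⁻¹)) ?_ ?_ ?_ hinner ?_]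
  · rw [integral_const_mul, integral_const_mul, integral_inv_one_add_mul_sq hc,
      rpow_three_halves ha.le, hc_def, sqrt_div' _ (sq_nonneg a), sqrt_sq ha.le, sqrt_mul ha.le]
    have := sqrt_pos.2 ha
    field_simp
  · exact (by fun_prop : Measurable _).aestronglyMeasurable
  · exact fun p => by positivity
  · intro x
    have hC : 0 < 1 + c * x ^ 2 := by positivity
    exact
      ((integrable_one_div_sq_add_rpow_three_halves hC).comp_add_right (b / a * x)).const_mul _
  · exact ((integrable_inv_one_add_mul_sq hc).const_mul 2).const_mul _

/-- the archimedean density integral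
`∫_{ℝ²} dx dy / ((λ²+μ²)(1+x²+y²) + 2μλxy)^{3/2}
  = 2π / √((λ²+μ²)(λ⁴+λ²μ²+μ⁴))` for `(μ,λ) ≠ (0,0)`. -/
theorem stmt_16 (μ lam : ℝ) (h : (μ, lam) ≠ (0, 0)) :
    ∫ p : ℝ × ℝ,
        1 / ((lam ^ 2 + μ ^ 2) * (1 + p.1 ^ 2 + p.2 ^ 2) + 2 * μ * lam * p.1 * p.2) ^
          ((3 : ℝ) / 2) =
      2 * Real.pi /
        Real.sqrt ((lam ^ 2 + μ ^ 2) * (lam ^ 4 + lam ^ 2 * μ ^ 2 + μ ^ 4)) := by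
  have ha : 0 < lam ^ 2 + μ ^ 2 := by
    rcases eq_or_ne μ 0 with rfl | hμ
    · have : lam ≠ 0 := fun hl => h (by rw [hl])
      positivity
    · positivity
  have hab : (μ * lam) ^ 2 < (lam ^ 2 + μ ^ 2) ^ 2 := by
    nlinarith [sq_nonneg (lam ^ 2 - μ ^ 2)]
  simp_rw [mul_assoc (2 : ℝ) μ lam]
  rw [integral_one_div_quadratic_rpow_three_halves ha hab]
  ring_nf
end
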